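/- arXiv:1304.5351 — 10 statements merged into one kernel-verified Lean document; each statement's English description precedes it below -/
import Mathlib

section
/- For any real numbers α, β with α < 1, β < 1 and α + β > 1, there is a constant C such that for all positive integers n and all nonnegative integers m, the sum Σ_{x,y > m, x+y=n} x^{-α} y^{-β} is at most C · (n+m)^{1-α-β}. -/
/-!
Since `x + y = n`, one of `x, y` is at least `n / 2`, so
`x ^ (-α) * y ^ (-β) ≤ x ^ (-α) * (n / 2) ^ (-β) + (n / 2) ^ (-α) * y ^ (-β)`.
Summing, each half is a partial sum of `x ^ (-γ)` with `γ < 1`, which the mean value theorem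
telescopes to at most `n ^ (1 - γ) / (1 - γ)`; this gives a bound `K * n ^ (1 - α - β)`.
Finally, a nonempty range forces `n ≥ 2 * m + 2`, so `n + m ≤ 2 * n`, and since the exponent
`1 - α - β` is negative, `n ^ (1 - α - β) ≤ 2 ^ (α + β - 1) * (n + m) ^ (1 - α - β)`.
-/

open Finset

lemma add_one_rpow_neg_le_rpow_sub_rpow {γ : ℝ} (hγ0 : 0 ≤ γ) (hγ1 : γ < 1) {a : ℝ}
    (ha : 0 ≤ a) :
    (a + 1) ^ (-γ) ≤ ((a + 1) ^ (1 - γ) - a ^ (1 - γ)) / (1 - γ) := by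
  have hp : 0 < 1 - γ := by linarith
  obtain ⟨c, ⟨hac, hc⟩, hslope⟩ := exists_hasDerivAt_eq_slope (fun t => t ^ (1 - γ))
      (fun t => (1 - γ) * t ^ (1 - γ - 1)) (lt_add_one a)
      (fun x _ => (Real.continuousAt_rpow_const x _ (Or.inr hp.le)).continuousWithinAt)
      (fun x hx => Real.hasDerivAt_rpow_const (Or.inl (by linarith [hx.1] : 0 < x).ne'))
  rw [add_sub_cancel_left, div_one, sub_sub_cancel_left] at hslope
  rw [le_div_iff₀ hp, ← hslope, mul_comm]
  exact mul_le_mul_of_nonneg_left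
    (Real.rpow_le_rpow_of_nonpos (ha.trans_lt hac) hc.le (by linarith)) hp.le

lemma sum_Ico_one_rpow_neg_le {γ : ℝ} (hγ0 : 0 ≤ γ) (hγ1 : γ < 1) (n : ℕ) :
    ∑ x ∈ Ico 1 n, (x : ℝ) ^ (-γ) ≤ (n : ℝ) ^ (1 - γ) / (1 - γ) := by
  have hp : 0 < 1 - γ := by linarith
  have htelescope :
      ∑ i ∈ range (n - 1), ((i : ℝ) + 1) ^ (-γ) ≤ ((n - 1 : ℕ) : ℝ) ^ (1 - γ) / (1 - γ) :=
    calc ∑ i ∈ range (n - 1), ((i : ℝ) + 1) ^ (-γ)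
        ≤ ∑ i ∈ range (n - 1),
            ((((i + 1 : ℕ) : ℝ) ^ (1 - γ) - (i : ℝ) ^ (1 - γ)) / (1 - γ)) :=
          sum_le_sum fun i _ => by
            push_cast; exact add_one_rpow_neg_le_rpow_sub_rpow hγ0 hγ1 i.cast_nonneg
      _ = ((n - 1 : ℕ) : ℝ) ^ (1 - γ) / (1 - γ) := by
          rw [← sum_div, sum_range_sub (fun i : ℕ => (i : ℝ) ^ (1 - γ)), Nat.cast_zero,
            Real.zero_rpow hp.ne', sub_zero]
  rw [sum_Ico_eq_sum_range]
  refine le_trans (by simpa [add_comm] using htelescope) ?_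
  gcongr
  exact_mod_cast Nat.sub_le n 1

lemma rpow_neg_mul_rpow_neg_le {α β : ℝ} (hα : 0 ≤ α) (hβ : 0 ≤ β) {x y : ℝ} (hx : 0 < x)
    (hy : 0 < y) :
    x ^ (-α) * y ^ (-β)
      ≤ x ^ (-α) * ((x + y) / 2) ^ (-β) + ((x + y) / 2) ^ (-α) * y ^ (-β) := by
  rcases le_total x y with hxy | hxy
  · have : y ^ (-β) ≤ ((x + y) / 2) ^ (-β) :=
      Real.rpow_le_rpow_of_nonpos (by linarith) (by linarith) (by linarith)
    have : 0 ≤ ((x + y) / 2) ^ (-α) * y ^ (-β) := by positivity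
    nlinarith [Real.rpow_nonneg hx.le (-α)]
  · have : x ^ (-α) ≤ ((x + y) / 2) ^ (-α) :=
      Real.rpow_le_rpow_of_nonpos (by linarith) (by linarith) (by linarith)
    have : 0 ≤ x ^ (-α) * ((x + y) / 2) ^ (-β) := by positivity
    nlinarith [Real.rpow_nonneg hy.le (-β)]

lemma half_rpow_neg {a : ℝ} (ha : 0 ≤ a) (γ : ℝ) : (a / 2) ^ (-γ) = 2 ^ γ * a ^ (-γ) := by
  rw [Real.div_rpow ha zero_le_two, Real.rpow_neg zero_le_two, div_inv_eq_mul, mul_comm]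

lemma sum_Ico_rpow_neg_mul_rpow_neg_le {α β : ℝ} (hα0 : 0 ≤ α) (hα1 : α < 1) (hβ0 : 0 ≤ β)
    (hβ1 : β < 1) {n : ℕ} (hn : 0 < n) :
    ∑ x ∈ Ico 1 n, (x : ℝ) ^ (-α) * ((n - x : ℕ) : ℝ) ^ (-β)
      ≤ (2 ^ β / (1 - α) + 2 ^ α / (1 - β)) * (n : ℝ) ^ (1 - α - β) := by
  have hn' : (0 : ℝ) < n := by exact_mod_cast hn
  have hreflect :
      ∑ x ∈ Ico 1 n, ((n - x : ℕ) : ℝ) ^ (-β) = ∑ y ∈ Ico 1 n, (y : ℝ) ^ (-β) := by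
    rw [sum_Ico_reflect (fun y => (y : ℝ) ^ (-β)) 1 (by omega)]
    congr 1
    ext; simp only [mem_Ico]; omega
  calc ∑ x ∈ Ico 1 n, (x : ℝ) ^ (-α) * ((n - x : ℕ) : ℝ) ^ (-β)
      ≤ ∑ x ∈ Ico 1 n, ((x : ℝ) ^ (-α) * ((n : ℝ) / 2) ^ (-β)
          + ((n : ℝ) / 2) ^ (-α) * ((n - x : ℕ) : ℝ) ^ (-β)) := by
        refine sum_le_sum fun x hx => ?_
        obtain ⟨hx1, hxn⟩ := mem_Ico.mp hx
        have hsum : (x : ℝ) + ((n - x : ℕ) : ℝ) = n := by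
          rw [Nat.cast_sub hxn.le]; ring
        simpa [hsum] using rpow_neg_mul_rpow_neg_le hα0 hβ0 (x := x) (y := ((n - x : ℕ) : ℝ))
          (by exact_mod_cast hx1) (by rw [Nat.cast_pos]; omega)
    _ = (∑ x ∈ Ico 1 n, (x : ℝ) ^ (-α)) * (2 ^ β * (n : ℝ) ^ (-β))
          + 2 ^ α * (n : ℝ) ^ (-α) * ∑ y ∈ Ico 1 n, (y : ℝ) ^ (-β) := by
        rw [sum_add_distrib, ← sum_mul, ← mul_sum, hreflect, half_rpow_neg hn'.le,
          half_rpow_neg hn'.le]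
    _ ≤ (n : ℝ) ^ (1 - α) / (1 - α) * (2 ^ β * (n : ℝ) ^ (-β))
          + 2 ^ α * (n : ℝ) ^ (-α) * ((n : ℝ) ^ (1 - β) / (1 - β)) := by
        gcongr
        · exact sum_Ico_one_rpow_neg_le hα0 hα1 n
        · exact sum_Ico_one_rpow_neg_le hβ0 hβ1 n
    _ = (2 ^ β / (1 - α) + 2 ^ α / (1 - β)) * (n : ℝ) ^ (1 - α - β) := by
        have h1 : (n : ℝ) ^ (1 - α) * (n : ℝ) ^ (-β) = (n : ℝ) ^ (1 - α - β) := by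
          rw [← Real.rpow_add hn']; ring_nf
        have h2 : (n : ℝ) ^ (-α) * (n : ℝ) ^ (1 - β) = (n : ℝ) ^ (1 - α - β) := by
          rw [← Real.rpow_add hn']; ring_nf
        linear_combination (2 ^ β / (1 - α)) * h1 + (2 ^ α / (1 - β)) * h2

lemma rpow_le_rpow_neg_mul_rpow_of_le_mul {a b c e : ℝ} (ha : 0 < a) (hb : 0 < b) (hc : 0 < c)
    (hbc : b ≤ c * a) (he : e ≤ 0) : a ^ e ≤ c ^ (-e) * b ^ e :=
  calc a ^ e = c ^ (-e) * (c * a) ^ e := by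
        rw [Real.mul_rpow hc.le ha.le, ← mul_assoc, ← Real.rpow_add hc, neg_add_cancel,
          Real.rpow_zero, one_mul]
    _ ≤ c ^ (-e) * b ^ e :=
        mul_le_mul_of_nonneg_left (Real.rpow_le_rpow_of_nonpos hb hbc he) (by positivity)

theorem stmt_2 (α β : ℝ) (hα : α < 1) (hβ : β < 1) (hαβ : 1 < α + β) :
    ∃ C : ℝ, 0 < C ∧ ∀ n m : ℕ, 0 < n →
      ∑ x ∈ Finset.Ico (m + 1) (n - m), (x : ℝ) ^ (-α) * ((n - x : ℕ) : ℝ) ^ (-β)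
        ≤ C * ((n + m : ℕ) : ℝ) ^ (1 - α - β) := by
  have hα0 : 0 ≤ α := by linarith
  have hβ0 : 0 ≤ β := by linarith
  refine ⟨2 ^ (α + β - 1) * (2 ^ β / (1 - α) + 2 ^ α / (1 - β)), by positivity,
    fun n m hn => ?_⟩
  rcases (Ico (m + 1) (n - m)).eq_empty_or_nonempty with hS | ⟨x, hx⟩
  · rw [hS, sum_empty]; positivity
  have hnm : n + m ≤ 2 * n := by rw [mem_Ico] at hx; omega
  calc ∑ x ∈ Ico (m + 1) (n - m), (x : ℝ) ^ (-α) * ((n - x : ℕ) : ℝ) ^ (-β)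
      ≤ ∑ x ∈ Ico 1 n, (x : ℝ) ^ (-α) * ((n - x : ℕ) : ℝ) ^ (-β) :=
        sum_le_sum_of_subset_of_nonneg (Ico_subset_Ico (by omega) (by omega))
          fun _ _ _ => by positivity
    _ ≤ (2 ^ β / (1 - α) + 2 ^ α / (1 - β)) * (n : ℝ) ^ (1 - α - β) :=
        sum_Ico_rpow_neg_mul_rpow_neg_le hα0 hα hβ0 hβ hn
    _ ≤ (2 ^ β / (1 - α) + 2 ^ α / (1 - β))
          * (2 ^ (α + β - 1) * ((n + m : ℕ) : ℝ) ^ (1 - α - β)) := by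
        rw [show α + β - 1 = -(1 - α - β) by ring]
        gcongr
        exact rpow_le_rpow_neg_mul_rpow_of_le_mul (by positivity) (by positivity) two_pos
          (by exact_mod_cast hnm) (by linarith)
    _ = _ := by ring
end

section
/- Let 1/2 < γ < 1. There is a constant C (depending only on γ) such that for all positive integers a, b, the sum over positive integers x of x^{-γ}(x+a)^{-γ}(x+b)^{1-2γ} is at most C · (ab)^{1-2γ}. -/
/-!
Since `1 - 2γ < 0`, the factor `(x + b)^(1 - 2γ)` is at most `b^(1 - 2γ)`, which leaves the
sum of `x^(-γ) (x + a)^(-γ)`; split it at `x = a`. For `x ≤ a` the middle factor is at most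
`a^(-γ)` and `∑_{x ≤ a} x^(-γ) ≤ a^(1-γ)/(1-γ)`, by telescoping the tangent-line bound for the
concave function `t ↦ t^(1-γ)`. For `x > a` the summand is at most `x^(-2γ)`, and the integral
test bounds that tail by `a^(1-2γ)/(2γ-1)`. Both pieces are multiples of `a^(1-2γ)`.
-/

open Finset Real Set

lemma mul_rpow_sub_one_le_rpow_sub_rpow {p m : ℝ} (hp₀ : 0 ≤ p) (hp₁ : p ≤ 1) (hm : 1 ≤ m) :
    p * m ^ (p - 1) ≤ m ^ p - (m - 1) ^ p := by
  have hm₀ : 0 < m := one_pos.trans_le hm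
  have hbern : (1 + -m⁻¹) ^ p ≤ 1 + p * -m⁻¹ :=
    rpow_one_add_le_one_add_mul_self (by linarith [inv_le_one_of_one_le₀ hm]) hp₀ hp₁
  have hsplit : (m - 1) ^ p = m ^ p * (1 + -m⁻¹) ^ p := by
    rw [← mul_rpow hm₀.le (by linarith [inv_le_one_of_one_le₀ hm])]
    field_simp
    ring_nf
  have hexpand : m ^ p * (1 + p * -m⁻¹) = m ^ p - p * (m ^ p / m) := by ring
  rw [hsplit, rpow_sub_one hm₀.ne']
  linarith [mul_le_mul_of_nonneg_left hbern (rpow_nonneg hm₀.le p)]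

lemma sum_range_rpow_neg_le {γ : ℝ} (hγ₀ : 0 ≤ γ) (hγ₁ : γ < 1) (n : ℕ) :
    ∑ i ∈ range n, ((i + 1 : ℕ) : ℝ) ^ (-γ) ≤ (n : ℝ) ^ (1 - γ) / (1 - γ) := by
  have htelescope : ∑ i ∈ range n, (((i + 1 : ℕ) : ℝ) ^ (1 - γ) - (i : ℝ) ^ (1 - γ)) =
      (n : ℝ) ^ (1 - γ) := by
    rw [sum_range_sub (fun i : ℕ ↦ (i : ℝ) ^ (1 - γ)), Nat.cast_zero, zero_rpow (by linarith),
      sub_zero]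
  rw [le_div_iff₀ (by linarith), sum_mul, ← htelescope]
  refine sum_le_sum fun i _ ↦ ?_
  have h := mul_rpow_sub_one_le_rpow_sub_rpow (p := 1 - γ) (m := ((i + 1 : ℕ) : ℝ))
    (by linarith) (by linarith) (by simp)
  simp only [sub_sub_cancel_left, Nat.cast_add_one, add_sub_cancel_right] at h ⊢
  linarith

lemma tsum_rpow_neg_nat_add_le {δ : ℝ} (hδ : 1 < δ) {N : ℕ} (hN : 0 < N) :
    ∑' n : ℕ, ((n + N + 1 : ℕ) : ℝ) ^ (-δ) ≤ (N : ℝ) ^ (1 - δ) / (δ - 1) := by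
  have hN' : (0 : ℝ) < N := by exact_mod_cast hN
  calc ∑' n : ℕ, ((n + N + 1 : ℕ) : ℝ) ^ (-δ) ≤ ∫ x in Ioi (N : ℝ), x ^ (-δ) :=
        ((antitoneOn_rpow_Ioi_of_exponent_nonpos (by linarith)).mono
          fun x hx ↦ hN'.trans_le hx).tsum_comp_add_le_integral N
          (integrableOn_Ioi_rpow_of_lt (by linarith) hN')
          fun x hx ↦ rpow_nonneg (hN'.le.trans hx.le) _
    _ = (N : ℝ) ^ (1 - δ) / (δ - 1) := by
        rw [integral_Ioi_rpow_of_lt (by linarith) hN', ← neg_div_neg_eq, neg_neg]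
        ring_nf

lemma rpow_neg_mul_rpow_neg_le_s4 {x y γ : ℝ} (hx : 0 < x) (hxy : x ≤ y) (hγ : 0 ≤ γ) :
    x ^ (-γ) * y ^ (-γ) ≤ x ^ (-(2 * γ)) :=
  calc x ^ (-γ) * y ^ (-γ) ≤ x ^ (-γ) * x ^ (-γ) :=
        mul_le_mul_of_nonneg_left (rpow_le_rpow_of_nonpos hx hxy (by linarith)) (by positivity)
    _ = x ^ (-(2 * γ)) := by rw [← rpow_add hx]; ring_nf

lemma summable_nat_add_rpow {p : ℝ} (hp : p < -1) (k : ℕ) :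
    Summable fun n : ℕ ↦ ((n + k : ℕ) : ℝ) ^ p :=
  (summable_nat_add_iff k).2 (summable_nat_rpow.2 hp)

section

variable {γ : ℝ}

lemma summable_rpow_neg_mul_rpow_neg_add (hγ : 1 / 2 < γ) (a : ℕ) :
    Summable fun x : ℕ ↦ ((x + 1 : ℕ) : ℝ) ^ (-γ) * ((x + 1 + a : ℕ) : ℝ) ^ (-γ) :=
  (summable_nat_add_rpow (p := -(2 * γ)) (by linarith) 1).of_nonneg_of_le
    (fun x ↦ by positivity)
    fun x ↦ rpow_neg_mul_rpow_neg_le_s4 (by positivity) (by simp) (by linarith)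

theorem tsum_rpow_neg_mul_rpow_neg_add_le (hγ₁ : 1 / 2 < γ) (hγ₂ : γ < 1) {a : ℕ} (ha : 0 < a) :
    ∑' x : ℕ, ((x + 1 : ℕ) : ℝ) ^ (-γ) * ((x + 1 + a : ℕ) : ℝ) ^ (-γ)
      ≤ (1 / (1 - γ) + 1 / (2 * γ - 1)) * (a : ℝ) ^ (1 - 2 * γ) := by
  have ha' : (0 : ℝ) < a := by exact_mod_cast ha
  set g : ℕ → ℝ := fun x ↦ ((x + 1 : ℕ) : ℝ) ^ (-γ) * ((x + 1 + a : ℕ) : ℝ) ^ (-γ)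
  have hg := summable_rpow_neg_mul_rpow_neg_add hγ₁ a
  have head : ∑ i ∈ range a, g i ≤ (a : ℝ) ^ (1 - γ) / (1 - γ) * (a : ℝ) ^ (-γ) :=
    calc ∑ i ∈ range a, g i ≤ ∑ i ∈ range a, ((i + 1 : ℕ) : ℝ) ^ (-γ) * (a : ℝ) ^ (-γ) :=
          sum_le_sum fun i _ ↦ mul_le_mul_of_nonneg_left
            (rpow_le_rpow_of_nonpos ha' (by norm_cast; omega) (by linarith)) (by positivity)
      _ = (∑ i ∈ range a, ((i + 1 : ℕ) : ℝ) ^ (-γ)) * (a : ℝ) ^ (-γ) := (sum_mul ..).symm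
      _ ≤ (a : ℝ) ^ (1 - γ) / (1 - γ) * (a : ℝ) ^ (-γ) := by
          gcongr
          exact sum_range_rpow_neg_le (by linarith) hγ₂ a
  have tail : ∑' i : ℕ, g (i + a) ≤ (a : ℝ) ^ (1 - 2 * γ) / (2 * γ - 1) :=
    calc ∑' i : ℕ, g (i + a) ≤ ∑' i : ℕ, ((i + a + 1 : ℕ) : ℝ) ^ (-(2 * γ)) :=
          ((summable_nat_add_iff a).2 hg).tsum_le_tsum
            (fun i ↦ rpow_neg_mul_rpow_neg_le_s4 (by positivity) (by simp) (by linarith))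
            (by simpa only [add_assoc] using
              summable_nat_add_rpow (p := -(2 * γ)) (by linarith) (a + 1))
      _ ≤ (a : ℝ) ^ (1 - 2 * γ) / (2 * γ - 1) := by
          simpa only [sub_neg_eq_add, ← sub_eq_add_neg] using
            tsum_rpow_neg_nat_add_le (δ := 2 * γ) (by linarith) ha
  rw [← hg.sum_add_tsum_nat_add a]
  have hpow : (a : ℝ) ^ (1 - γ) * (a : ℝ) ^ (-γ) = (a : ℝ) ^ (1 - 2 * γ) := by
    rw [← rpow_add ha']; ring_nf
  calc ∑ i ∈ range a, g i + ∑' i : ℕ, g (i + a)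
      ≤ (a : ℝ) ^ (1 - γ) / (1 - γ) * (a : ℝ) ^ (-γ) + (a : ℝ) ^ (1 - 2 * γ) / (2 * γ - 1) :=
        add_le_add head tail
    _ = (1 / (1 - γ) + 1 / (2 * γ - 1)) * (a : ℝ) ^ (1 - 2 * γ) := by
        rw [div_mul_eq_mul_div, hpow]; ring

end

theorem stmt_4 (γ : ℝ) (hγ₁ : 1 / 2 < γ) (hγ₂ : γ < 1) :
    ∃ C : ℝ, 0 < C ∧ ∀ a b : ℕ, 0 < a → 0 < b →
      ∑' x : ℕ, ((x + 1 : ℕ) : ℝ) ^ (-γ) * ((x + 1 + a : ℕ) : ℝ) ^ (-γ) *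
          ((x + 1 + b : ℕ) : ℝ) ^ (1 - 2 * γ)
        ≤ C * ((a * b : ℕ) : ℝ) ^ (1 - 2 * γ) := by
  have h₁ : 0 < 1 - γ := by linarith
  have h₂ : 0 < 2 * γ - 1 := by linarith
  refine ⟨1 / (1 - γ) + 1 / (2 * γ - 1), by positivity, fun a b ha hb ↦ ?_⟩
  have hb' : (0 : ℝ) < b := by exact_mod_cast hb
  have hg := summable_rpow_neg_mul_rpow_neg_add hγ₁ a
  have hterm : ∀ x : ℕ, ((x + 1 : ℕ) : ℝ) ^ (-γ) * ((x + 1 + a : ℕ) : ℝ) ^ (-γ) *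
      ((x + 1 + b : ℕ) : ℝ) ^ (1 - 2 * γ)
      ≤ (b : ℝ) ^ (1 - 2 * γ) * (((x + 1 : ℕ) : ℝ) ^ (-γ) * ((x + 1 + a : ℕ) : ℝ) ^ (-γ)) := by
    intro x
    rw [mul_comm]
    exact mul_le_mul_of_nonneg_right
      (rpow_le_rpow_of_nonpos hb' (by norm_cast; omega) (by linarith)) (by positivity)
  calc _ ≤ ∑' x : ℕ, (b : ℝ) ^ (1 - 2 * γ) *
          (((x + 1 : ℕ) : ℝ) ^ (-γ) * ((x + 1 + a : ℕ) : ℝ) ^ (-γ)) :=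
        (hg.mul_left _).of_nonneg_of_le (fun x ↦ by positivity) hterm |>.tsum_le_tsum hterm
          (hg.mul_left _)
    _ = (b : ℝ) ^ (1 - 2 * γ) * ∑' x : ℕ, ((x + 1 : ℕ) : ℝ) ^ (-γ) * ((x + 1 + a : ℕ) : ℝ) ^ (-γ) :=
        tsum_mul_left
    _ ≤ (b : ℝ) ^ (1 - 2 * γ) * ((1 / (1 - γ) + 1 / (2 * γ - 1)) * (a : ℝ) ^ (1 - 2 * γ)) := by
        gcongr
        exact tsum_rpow_neg_mul_rpow_neg_add_le hγ₁ hγ₂ ha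
    _ = _ := by rw [Nat.cast_mul, mul_rpow (by positivity) hb'.le]; ring
end

section
/- Let p be an odd prime and g a primitive root modulo p. The set S = {(x mod (p−1), g^x mod p) : x = 0, 1, …, p−2} is a Sidon set in the group Z_{p−1} × Z_p, i.e., for any elements s₁, s₂, s₃, s₄ ∈ S with s₁ + s₂ = s₃ + s₄, we have {s₁, s₂} = {s₃, s₄}. -/
/-!
Since `g` has order `p - 1`, the residue of `x` mod `p - 1` is determined by `g ^ x`, and the
residue of `x₁ + x₂` by the product `g ^ x₁ * g ^ x₂`. So `s₁ + s₂ = s₃ + s₄` says that the pairs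
`g ^ x₁, g ^ x₂` and `g ^ x₃, g ^ x₄` have the same sum and the same product; they are then the
roots of the same quadratic over the field `ZMod p`, hence coincide as unordered pairs.
-/

theorem eq_and_eq_or_eq_and_eq_of_add_eq_add_of_mul_eq_mul {R : Type*} [CommRing R]
    [NoZeroDivisors R] {a b c d : R} (hadd : a + b = c + d) (hmul : a * b = c * d) :
    (a = c ∧ b = d) ∨ (a = d ∧ b = c) := by
  have hroot : (a - c) * (a - d) = 0 := by linear_combination a * hadd - hmul
  rcases mul_eq_zero.mp hroot with h | h
  · have hac : a = c := sub_eq_zero.mp h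
    exact Or.inl ⟨hac, by linear_combination hadd - hac⟩
  · have had : a = d := sub_eq_zero.mp h
    exact Or.inr ⟨had, by linear_combination hadd - had⟩

theorem Units.val_pow_eq_val_pow_iff {M : Type*} [Monoid M] {g : Mˣ} {n : ℕ}
    (hn : orderOf g = n) (a b : ℕ) : (g : M) ^ a = (g : M) ^ b ↔ (a : ZMod n) = b := by
  rw [← Units.val_pow_eq_pow_val, ← Units.val_pow_eq_pow_val, Units.val_inj,
    pow_eq_pow_iff_modEq, hn, ZMod.natCast_eq_natCast_iff]

section PowGraph

variable {R : Type*} [CommRing R] {g : Rˣ} {n : ℕ}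

variable (g n) in
def powGraph (x : ℕ) : ZMod n × R := ((x : ZMod n), (g : R) ^ x)

theorem powGraph_eq_powGraph_iff (hn : orderOf g = n) {x y : ℕ} :
    powGraph g n x = powGraph g n y ↔ (g : R) ^ x = (g : R) ^ y := by
  rw [powGraph, powGraph, Prod.mk.injEq, Units.val_pow_eq_val_pow_iff hn, and_self]

theorem powGraph_add_eq_add [NoZeroDivisors R] (hn : orderOf g = n) {x₁ x₂ x₃ x₄ : ℕ}
    (h : powGraph g n x₁ + powGraph g n x₂ = powGraph g n x₃ + powGraph g n x₄) :
    (powGraph g n x₁ = powGraph g n x₃ ∧ powGraph g n x₂ = powGraph g n x₄) ∨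
      (powGraph g n x₁ = powGraph g n x₄ ∧ powGraph g n x₂ = powGraph g n x₃) := by
  simp only [powGraph_eq_powGraph_iff hn]
  obtain ⟨hexp, hval⟩ := Prod.ext_iff.mp h
  have hmul : (g : R) ^ x₁ * (g : R) ^ x₂ = (g : R) ^ x₃ * (g : R) ^ x₄ := by
    rw [← pow_add, ← pow_add, Units.val_pow_eq_val_pow_iff hn]
    push_cast
    exact hexp
  exact eq_and_eq_or_eq_and_eq_of_add_eq_add_of_mul_eq_mul hval hmul

end PowGraph

theorem stmt_5_general (p : ℕ) (hp : p.Prime) (g : (ZMod p)ˣ)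
    (hg : ∀ u : (ZMod p)ˣ, ∃ k : ℕ, g ^ k = u)
    (S : Set (ZMod (p - 1) × ZMod p))
    (hS : S = {s | ∃ x : ℕ, x ≤ p - 2 ∧ s = ((x : ZMod (p - 1)), ((g : ZMod p)) ^ x)}) :
    ∀ s₁ ∈ S, ∀ s₂ ∈ S, ∀ s₃ ∈ S, ∀ s₄ ∈ S,
      s₁ + s₂ = s₃ + s₄ → (s₁ = s₃ ∧ s₂ = s₄) ∨ (s₁ = s₄ ∧ s₂ = s₃) := by
  have := Fact.mk hp
  have hord : orderOf g = p - 1 := by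
    rw [orderOf_eq_card_of_forall_mem_powers fun u ↦ (Submonoid.mem_powers_iff _ _).mpr (hg u),
      Nat.card_eq_fintype_card, ZMod.card_units]
  rw [hS]
  rintro _ ⟨x₁, -, rfl⟩ _ ⟨x₂, -, rfl⟩ _ ⟨x₃, -, rfl⟩ _ ⟨x₄, -, rfl⟩
  exact powGraph_add_eq_add hord

theorem stmt_5 (p : ℕ) (hp : p.Prime) (hodd : Odd p) (g : (ZMod p)ˣ)
    (hg : ∀ u : (ZMod p)ˣ, ∃ k : ℕ, g ^ k = u)
    (S : Set (ZMod (p - 1) × ZMod p))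
    (hS : S = {s | ∃ x : ℕ, x ≤ p - 2 ∧ s = ((x : ZMod (p - 1)), ((g : ZMod p)) ^ x)}) :
    ∀ s₁ ∈ S, ∀ s₂ ∈ S, ∀ s₃ ∈ S, ∀ s₄ ∈ S,
      s₁ + s₂ = s₃ + s₄ → (s₁ = s₃ ∧ s₂ = s₄) ∨ (s₁ = s₄ ∧ s₂ = s₃) :=
  stmt_5_general p hp g hg S hS
end

section
/- Let p be an odd prime. The set A = {x + 2p·(x² mod p) : x = 0, 1, …, p−1} is a Sidon set of integers: if a₁ + a₂ = a₃ + a₄ with a₁, a₂, a₃, a₄ ∈ A, then {a₁, a₂} = {a₃, a₄}. -/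
/- The map x ↦ x + 2p·(x² mod p) writes an element of A in base 2p with digits x and x² mod p. A sum
of two elements of A has its low digit x₁ + x₂ < 2p, so a coincidence a₁ + a₂ = a₃ + a₄ splits into
x₁ + x₂ = x₃ + x₄ and x₁² + x₂² ≡ x₃² + x₄² (mod p). Over a field of characteristic ≠ 2 these two
equations determine the pair {x₁, x₂}, and x ↦ x mod p is injective on {0, …, p − 1}. -/

theorem Nat.eq_and_eq_of_add_mul_eq_add_mul {m a b c d : ℕ} (ha : a < m) (hb : b < m)
    (h : a + m * c = b + m * d) : a = b ∧ c = d := by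
  have hm : 0 < m := by omega
  obtain ⟨hc, ha'⟩ := (Nat.div_mod_unique hm).mpr ⟨rfl, ha⟩
  obtain ⟨hd, hb'⟩ := (Nat.div_mod_unique hm).mpr ⟨h.symm, hb⟩
  exact ⟨ha'.symm.trans hb', hc.symm.trans hd⟩

/- Eliminating the second summand leaves 2 (a − c)(a − d) = 0. -/
theorem eq_and_eq_or_eq_and_eq_of_add_eq_add_of_sq_add_sq_eq {R : Type*} [CommRing R]
    [NoZeroDivisors R] (h2 : (2 : R) ≠ 0) {a b c d : R} (hsum : a + b = c + d)
    (hsq : a ^ 2 + b ^ 2 = c ^ 2 + d ^ 2) : (a = c ∧ b = d) ∨ (a = d ∧ b = c) := by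
  have hb : b = c + d - a := by linear_combination hsum
  subst hb
  have hprod : 2 * ((a - c) * (a - d)) = 0 := by linear_combination hsq
  rcases mul_eq_zero.mp ((mul_eq_zero.mp hprod).resolve_left h2) with h | h
  · obtain rfl := sub_eq_zero.mp h
    exact Or.inl ⟨rfl, by ring⟩
  · obtain rfl := sub_eq_zero.mp h
    exact Or.inr ⟨rfl, by ring⟩

theorem ZMod.eq_of_natCast_eq_of_lt {n a b : ℕ} (ha : a < n) (hb : b < n) (h : (a : ZMod n) = b) :
    a = b := by
  rw [← ZMod.val_natCast_of_lt ha, ← ZMod.val_natCast_of_lt hb, h]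

theorem ZMod.two_ne_zero_of_odd {p : ℕ} [Fact p.Prime] (hodd : Odd p) : (2 : ZMod p) ≠ 0 :=
  Ring.two_ne_zero (by rw [ZMod.ringChar_zmod_n]; rintro rfl; exact absurd hodd (by decide))

theorem stmt_6 (p : ℕ) (hp : p.Prime) (hodd : Odd p)
    (A : Set ℤ)
    (hA : A = {a | ∃ x : ℕ, x < p ∧ a = (x : ℤ) + 2 * p * ((x ^ 2 : ℕ) % p : ℕ)}) :
    ∀ a₁ ∈ A, ∀ a₂ ∈ A, ∀ a₃ ∈ A, ∀ a₄ ∈ A,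
      a₁ + a₂ = a₃ + a₄ → (a₁ = a₃ ∧ a₂ = a₄) ∨ (a₁ = a₄ ∧ a₂ = a₃) := by
  have := Fact.mk hp
  subst hA
  rintro _ ⟨x₁, h₁, rfl⟩ _ ⟨x₂, h₂, rfl⟩ _ ⟨x₃, h₃, rfl⟩ _ ⟨x₄, h₄, rfl⟩ hsum
  obtain ⟨hx, hs⟩ := Nat.eq_and_eq_of_add_mul_eq_add_mul (m := 2 * p)
    (a := x₁ + x₂) (b := x₃ + x₄) (c := x₁ ^ 2 % p + x₂ ^ 2 % p) (d := x₃ ^ 2 % p + x₄ ^ 2 % p)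
    (by omega) (by omega) (Nat.cast_injective (R := ℤ) <| by
      simp only [Nat.cast_add, Nat.cast_mul, Nat.cast_ofNat]; linear_combination hsum)
  have hsq : (x₁ : ZMod p) ^ 2 + (x₂ : ZMod p) ^ 2 = (x₃ : ZMod p) ^ 2 + (x₄ : ZMod p) ^ 2 := by
    simpa only [Nat.cast_add, ZMod.natCast_mod, Nat.cast_pow] using congrArg (Nat.cast : ℕ → ZMod p) hs
  rcases eq_and_eq_or_eq_and_eq_of_add_eq_add_of_sq_add_sq_eq (ZMod.two_ne_zero_of_odd hodd)
    (by exact_mod_cast congrArg (Nat.cast : ℕ → ZMod p) hx) hsq with ⟨h₁₃, h₂₄⟩ | ⟨h₁₄, h₂₃⟩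
  · rw [ZMod.eq_of_natCast_eq_of_lt h₁ h₃ h₁₃, ZMod.eq_of_natCast_eq_of_lt h₂ h₄ h₂₄]
    exact Or.inl ⟨rfl, rfl⟩
  · rw [ZMod.eq_of_natCast_eq_of_lt h₁ h₄ h₁₄, ZMod.eq_of_natCast_eq_of_lt h₂ h₃ h₂₃]
    exact Or.inr ⟨rfl, rfl⟩
end

section
/- For a prime p ≥ 5 and nonzero λ, b ∈ F_p, the number of solutions (X, Y) ∈ F_p^* × F_p^* of the equation X + Y + λ/(XY) = b equals the number of points (U, V) ∈ F_p² with V ≠ 0 on the curve U² = 4V³ + (bV + λ)². -/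
/-!
Put `V = -λ/Y` and `W = 2V²/X`. Clearing denominators, `X + Y + λ/(XY) = b` becomes
`W² + 2(bV + λ)W = 4V³`, and completing the square with `U = W + bV + λ` gives the curve
`U² = 4V³ + (bV + λ)²`. Conversely `W = U - bV - λ` cannot vanish on the curve (it would
force `4V³ = 0`), so `X = 2V²/W` recovers the solution.
-/

namespace SumCurveBijection

variable {K : Type*} [Field K]

def sumSolutions (l b : K) : Set (K × K) :=
  {XY | XY.1 ≠ 0 ∧ XY.2 ≠ 0 ∧ XY.1 + XY.2 + l / (XY.1 * XY.2) = b}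

def curvePoints (l b : K) : Set (K × K) :=
  {UV | UV.2 ≠ 0 ∧ UV.1 ^ 2 = 4 * UV.2 ^ 3 + (b * UV.2 + l) ^ 2}

def toCurve (l b : K) (XY : K × K) : K × K :=
  (b * (-l / XY.2) + l + 2 * (-l / XY.2) ^ 2 / XY.1, -l / XY.2)

def fromCurve (l b : K) (UV : K × K) : K × K :=
  (2 * UV.2 ^ 2 / (UV.1 - b * UV.2 - l), -l / UV.2)

variable {l b : K}

theorem sub_ne_zero_of_mem_curvePoints (h2 : (2 : K) ≠ 0) {UV : K × K}
    (h : UV ∈ curvePoints l b) : UV.1 - b * UV.2 - l ≠ 0 := by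
  obtain ⟨hV, hE⟩ := h
  intro hD
  have h4V : (2 * 2 : K) * UV.2 ^ 3 = 0 := by
    linear_combination (UV.1 + b * UV.2 + l) * hD - hE
  exact mul_ne_zero (mul_ne_zero h2 h2) (pow_ne_zero 3 hV) h4V

theorem mapsTo_toCurve (hl : l ≠ 0) :
    Set.MapsTo (toCurve l b) (sumSolutions l b) (curvePoints l b) := by
  rintro ⟨X, Y⟩ ⟨hX, hY, hE⟩
  refine ⟨div_ne_zero (neg_ne_zero.mpr hl) hY, ?_⟩
  simp only [toCurve] at hE ⊢
  field_simp at hE ⊢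
  linear_combination 4 * l * hE

theorem mapsTo_fromCurve (h2 : (2 : K) ≠ 0) (hl : l ≠ 0) :
    Set.MapsTo (fromCurve l b) (curvePoints l b) (sumSolutions l b) := by
  rintro ⟨U, V⟩ hUV
  have hD := sub_ne_zero_of_mem_curvePoints h2 hUV
  obtain ⟨hV, hE⟩ := hUV
  simp only at hD hV hE
  refine ⟨div_ne_zero (mul_ne_zero h2 (pow_ne_zero 2 hV)) hD,
    div_ne_zero (neg_ne_zero.mpr hl) hV, ?_⟩
  simp only [fromCurve]
  have hD' : U - V * b - l ≠ 0 := by rwa [mul_comm V b]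
  field_simp
  linear_combination -hE

theorem leftInvOn_fromCurve_toCurve (h2 : (2 : K) ≠ 0) (hl : l ≠ 0) :
    Set.LeftInvOn (fromCurve l b) (toCurve l b) (sumSolutions l b) := by
  rintro ⟨X, Y⟩ ⟨-, hY, -⟩
  dsimp only at hY
  have hV : -l / Y ≠ 0 := div_ne_zero (neg_ne_zero.mpr hl) hY
  have hW : b * (-l / Y) + l + 2 * (-l / Y) ^ 2 / X - b * (-l / Y) - l =
      2 * (-l / Y) ^ 2 / X := by
    ring
  simp only [fromCurve, toCurve]
  rw [hW, div_div_cancel₀ (mul_ne_zero h2 (pow_ne_zero 2 hV)),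
    div_div_cancel₀ (neg_ne_zero.mpr hl)]

theorem rightInvOn_fromCurve_toCurve (h2 : (2 : K) ≠ 0) (hl : l ≠ 0) :
    Set.RightInvOn (fromCurve l b) (toCurve l b) (curvePoints l b) := by
  rintro ⟨U, V⟩ hUV
  have hD := sub_ne_zero_of_mem_curvePoints h2 hUV
  obtain ⟨hV, -⟩ := hUV
  simp only at hD hV
  simp only [fromCurve, toCurve, Prod.mk.injEq]
  constructor
  · field_simp
    ring
  · field_simp

theorem ncard_sumSolutions_eq (h2 : (2 : K) ≠ 0) (hl : l ≠ 0) :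
    (sumSolutions l b).ncard = (curvePoints l b).ncard :=
  Set.BijOn.ncard_eq <|
    Set.InvOn.bijOn ⟨leftInvOn_fromCurve_toCurve h2 hl, rightInvOn_fromCurve_toCurve h2 hl⟩
      (mapsTo_toCurve hl) (mapsTo_fromCurve h2 hl)

end SumCurveBijection

theorem stmt_8_general (p : ℕ) [Fact p.Prime] (hp : 5 ≤ p) (l b : ZMod p)
    (hl : l ≠ 0) :
    Set.ncard {XY : ZMod p × ZMod p |
        XY.1 ≠ 0 ∧ XY.2 ≠ 0 ∧ XY.1 + XY.2 + l / (XY.1 * XY.2) = b} =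
    Set.ncard {UV : ZMod p × ZMod p |
        UV.2 ≠ 0 ∧ UV.1 ^ 2 = 4 * UV.2 ^ 3 + (b * UV.2 + l) ^ 2} := by
  have h2 : (2 : ZMod p) ≠ 0 := Ring.two_ne_zero <| by rw [ZMod.ringChar_zmod_n]; omega
  exact SumCurveBijection.ncard_sumSolutions_eq h2 hl

theorem stmt_8 (p : ℕ) [Fact p.Prime] (hp : 5 ≤ p) (l b : ZMod p)
    (hl : l ≠ 0) (hb : b ≠ 0) :
    Set.ncard {XY : ZMod p × ZMod p |
        XY.1 ≠ 0 ∧ XY.2 ≠ 0 ∧ XY.1 + XY.2 + l / (XY.1 * XY.2) = b} =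
    Set.ncard {UV : ZMod p × ZMod p |
        UV.2 ≠ 0 ∧ UV.1 ^ 2 = 4 * UV.2 ^ 3 + (b * UV.2 + l) ^ 2} :=
  stmt_8_general p hp l b hl
end

section
/- Let Ω be a finite family of vectors with h coordinates (elements of ℕ^h). If Ω does not contain a vectorial sunflower of k petals, then |Ω| ≤ h! · ((h² − h + 1)·k)^h. -/
/-!
Induction on `h`. Take a maximal subfamily `F ⊆ Ω` of vectors with pairwise disjoint sets of
coordinates; it is a sunflower with empty kernel, so `|F| < k`. By maximality every vector of `Ω`
shares a value `x i = y j` with some `y ∈ F`, so `Ω` is covered by the at most `k h²` fibers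
`{x ∈ Ω | x i = y j}`. Deleting the constant coordinate `i` maps such a fiber injectively onto a
sunflower-free family of vectors of `h - 1` coordinates, and sunflowers lift back by reinserting it.
-/

/-- A finite family `P` of vectors of `h` coordinates forms a vectorial sunflower
(of `P.card` petals) if there is a set `I` of indices such that all vectors agree
on coordinates in `I`, and after deleting the coordinates in `I` the vectors have
pairwise disjoint sets of coordinates. -/
def IsVecSunflower {h : ℕ} (P : Finset (Fin h → ℕ)) : Prop :=
  ∃ I : Finset (Fin h),
    (∀ i ∈ I, ∀ x ∈ P, ∀ y ∈ P, x i = y i) ∧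
    (∀ x ∈ P, ∀ y ∈ P, x ≠ y → ∀ i, i ∉ I → ∀ j, j ∉ I → x i ≠ y j)

open Finset Nat

def SunflowerFree {h : ℕ} (k : ℕ) (Ω : Finset (Fin h → ℕ)) : Prop :=
  ¬ ∃ P ⊆ Ω, P.card = k ∧ IsVecSunflower P

def PairwiseDisjointValues {ι β : Type*} (P : Finset (ι → β)) : Prop :=
  ∀ x ∈ P, ∀ y ∈ P, x ≠ y → ∀ i j, x i ≠ y j

section PairwiseDisjointValues

variable {ι β : Type*}

theorem PairwiseDisjointValues.mono {P Q : Finset (ι → β)} (hP : PairwiseDisjointValues P)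
    (hQP : Q ⊆ P) : PairwiseDisjointValues Q :=
  fun x hx y hy => hP x (hQP hx) y (hQP hy)

theorem PairwiseDisjointValues.insert [DecidableEq (ι → β)] {F : Finset (ι → β)}
    {x : ι → β} (hF : PairwiseDisjointValues F) (hx : ∀ y ∈ F, ∀ i j, x i ≠ y j) :
    PairwiseDisjointValues (insert x F) := by
  intro a ha b hb hab
  rcases mem_insert.mp ha with rfl | haF <;> rcases mem_insert.mp hb with rfl | hbF
  · exact absurd rfl hab
  · exact hx b hbF
  · exact fun i j => (hx a haF j i).symm
  · exact hF a haF b hbF hab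

theorem exists_pairwiseDisjointValues_cover [Nonempty ι] (Ω : Finset (ι → β)) :
    ∃ F ⊆ Ω, PairwiseDisjointValues F ∧ ∀ x ∈ Ω, ∃ y ∈ F, ∃ i j, x i = y j := by
  classical
  obtain ⟨F, hF, hFmax⟩ := exists_max_image (Ω.powerset.filter PairwiseDisjointValues) card
    ⟨∅, by simp [PairwiseDisjointValues]⟩
  rw [mem_filter, mem_powerset] at hF
  refine ⟨F, hF.1, hF.2, fun x hx => ?_⟩
  by_contra! hdisj
  have hxF : x ∉ F := fun hxF =>
    hdisj x hxF (Classical.arbitrary ι) (Classical.arbitrary ι) rfl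
  have := hFmax (insert x F) (by
    rw [mem_filter, mem_powerset]
    exact ⟨insert_subset hx hF.1, hF.2.insert hdisj⟩)
  rw [card_insert_of_notMem hxF] at this
  omega

theorem card_le_of_forall_exists_apply_eq [Fintype ι] [DecidableEq β]
    {Ω F : Finset (ι → β)} {B : ℕ} (hcover : ∀ x ∈ Ω, ∃ y ∈ F, ∃ i j, x i = y j)
    (hB : ∀ i b, (Ω.filter (· i = b)).card ≤ B) :
    Ω.card ≤ F.card * Fintype.card ι ^ 2 * B := by
  classical
  have hsub : Ω ⊆ F.biUnion fun y =>
      (univ : Finset (ι × ι)).biUnion fun p => Ω.filter (· p.1 = y p.2) := by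
    intro x hx
    obtain ⟨y, hy, i, j, hxy⟩ := hcover x hx
    simp only [mem_biUnion, mem_univ, mem_filter, true_and, Prod.exists]
    exact ⟨y, hy, i, j, hx, hxy⟩
  calc Ω.card ≤ ∑ y ∈ F, ∑ p : ι × ι, (Ω.filter (· p.1 = y p.2)).card :=
        (card_le_card hsub).trans <| card_biUnion_le.trans <| sum_le_sum fun _ _ => card_biUnion_le
    _ ≤ ∑ _y ∈ F, ∑ _p : ι × ι, B := sum_le_sum fun _ _ => sum_le_sum fun _ _ => hB _ _
    _ = F.card * Fintype.card ι ^ 2 * B := by simp [sq, mul_assoc]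

end PairwiseDisjointValues

theorem PairwiseDisjointValues.isVecSunflower {h : ℕ} {P : Finset (Fin h → ℕ)}
    (hP : PairwiseDisjointValues P) : IsVecSunflower P :=
  ⟨∅, by simp, fun x hx y hy hxy i _ j _ => hP x hx y hy hxy i j⟩

theorem SunflowerFree.card_lt {h k : ℕ} {Ω P : Finset (Fin h → ℕ)} (hΩ : SunflowerFree k Ω)
    (hPΩ : P ⊆ Ω) (hP : PairwiseDisjointValues P) : P.card < k := by
  by_contra! hk
  obtain ⟨Q, hQP, hQ⟩ := exists_subset_card_eq hk
  exact hΩ ⟨Q, hQP.trans hPΩ, hQ, (hP.mono hQP).isVecSunflower⟩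

theorem IsVecSunflower.image_insertNth {n : ℕ} {P : Finset (Fin n → ℕ)}
    (hP : IsVecSunflower P) (i : Fin (n + 1)) (v : ℕ) :
    IsVecSunflower (P.image (i.insertNth v)) := by
  obtain ⟨I, hI, hdisj⟩ := hP
  refine ⟨insert i (I.image i.succAbove), ?_, ?_⟩
  · simp only [mem_insert, mem_image]
    rintro j (rfl | ⟨j, hj, rfl⟩) _ ⟨a, ha, rfl⟩ _ ⟨b, hb, rfl⟩
    · simp
    · simpa using hI j hj a ha b hb
  · simp only [mem_image, mem_insert, not_or]
    rintro _ ⟨a, ha, rfl⟩ _ ⟨b, hb, rfl⟩ hab j ⟨hji, hj⟩ j' ⟨hj'i, hj'⟩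
    obtain ⟨c, rfl⟩ := Fin.exists_succAbove_eq hji
    obtain ⟨d, rfl⟩ := Fin.exists_succAbove_eq hj'i
    simpa using hdisj a ha b hb (fun h => hab (h ▸ rfl)) c (fun hc => hj ⟨c, hc, rfl⟩)
      d (fun hd => hj' ⟨d, hd, rfl⟩)

theorem SunflowerFree.image_removeNth_filter {n k : ℕ} {Ω : Finset (Fin (n + 1) → ℕ)}
    (hΩ : SunflowerFree k Ω) (i : Fin (n + 1)) (v : ℕ) :
    SunflowerFree k ((Ω.filter (· i = v)).image i.removeNth) := by
  rintro ⟨P, hP, hcard, hsun⟩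
  refine hΩ ⟨P.image (i.insertNth v), fun x hx => ?_, ?_, hsun.image_insertNth i v⟩
  · obtain ⟨y, hy, rfl⟩ := mem_image.mp hx
    obtain ⟨z, hz, rfl⟩ := mem_image.mp (hP hy)
    rw [mem_filter] at hz
    rw [← hz.2, Fin.insertNth_self_removeNth]
    exact hz.1
  · rwa [Finset.card_image_of_injective _ (Fin.insertNth_right_injective (α := fun _ => ℕ) v)]

theorem card_image_removeNth_filter {n : ℕ} (Ω : Finset (Fin (n + 1) → ℕ)) (i : Fin (n + 1))
    (v : ℕ) : ((Ω.filter (· i = v)).image i.removeNth).card = (Ω.filter (· i = v)).card := by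
  refine card_image_of_injOn fun x hx y hy hxy => ?_
  simp only [coe_filter, Set.mem_ofPred_eq] at hx hy
  rw [← Fin.insertNth_self_removeNth i x, ← Fin.insertNth_self_removeNth i y, hx.2, hy.2]
  exact congrArg _ hxy

theorem succ_bound_le (n k : ℕ) :
    k * (n + 1) ^ 2 * (n ! * ((n ^ 2 - n + 1) * k) ^ n) ≤
      (n + 1) ! * (((n + 1) ^ 2 - (n + 1) + 1) * k) ^ (n + 1) := by
  have hsq : (n + 1) ^ 2 - (n + 1) + 1 = n ^ 2 + n + 1 := by
    have : (n + 1) ^ 2 = n ^ 2 + n + (n + 1) := by ring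
    omega
  have hlin : (n + 1) * k ≤ (n ^ 2 + n + 1) * k := by gcongr; nlinarith
  have hpow : ((n ^ 2 - n + 1) * k) ^ n ≤ ((n ^ 2 + n + 1) * k) ^ n := by gcongr; omega
  calc k * (n + 1) ^ 2 * (n ! * ((n ^ 2 - n + 1) * k) ^ n)
        = (n + 1) ! * ((n + 1) * k * ((n ^ 2 - n + 1) * k) ^ n) := by
          rw [factorial_succ]; ring
    _ ≤ (n + 1) ! * ((n ^ 2 + n + 1) * k * ((n ^ 2 + n + 1) * k) ^ n) := by gcongr
    _ = (n + 1) ! * (((n + 1) ^ 2 - (n + 1) + 1) * k) ^ (n + 1) := by rw [hsq]; ring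

theorem stmt_9 (h k : ℕ) (Ω : Finset (Fin h → ℕ))
    (hΩ : ¬ ∃ P ⊆ Ω, P.card = k ∧ IsVecSunflower P) :
    Ω.card ≤ h.factorial * ((h ^ 2 - h + 1) * k) ^ h := by
  induction h with
  | zero => simpa using card_le_one_of_subsingleton Ω
  | succ n ih =>
    have hΩ : SunflowerFree k Ω := hΩ
    obtain ⟨F, hFΩ, hF, hcover⟩ := exists_pairwiseDisjointValues_cover Ω
    have hfiber (i : Fin (n + 1)) (v : ℕ) :
        (Ω.filter (· i = v)).card ≤ n ! * ((n ^ 2 - n + 1) * k) ^ n :=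
      card_image_removeNth_filter Ω i v ▸ ih _ (hΩ.image_removeNth_filter i v)
    calc Ω.card ≤ F.card * (n + 1) ^ 2 * (n ! * ((n ^ 2 - n + 1) * k) ^ n) := by
          simpa using card_le_of_forall_exists_apply_eq hcover hfiber
      _ ≤ k * (n + 1) ^ 2 * (n ! * ((n ^ 2 - n + 1) * k) ^ n) := by
          gcongr; exact (hΩ.card_lt hFΩ hF).le
      _ ≤ _ := succ_bound_le n k
end

section
/- Let Ω be a finite family of h-element sets. If Ω does not contain a sunflower with k petals, then |Ω| ≤ h!(k−1)^h. -/
theorem sunflower_aux (h : ℕ) : ∀ (k : ℕ) (Ω : Finset (Finset ℕ)),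
    (∀ ω ∈ Ω, ω.card = h) →
    (¬ ∃ P ⊆ Ω, P.card = k ∧ ∃ C : Finset ℕ,
        ∀ x ∈ P, ∀ y ∈ P, x ≠ y → x ∩ y = C) →
    Ω.card ≤ h.factorial * (k - 1) ^ h := by
  induction h with
  | zero =>
    intro k Ω hsets hΩ
    simp only [Nat.factorial_zero, pow_zero, mul_one]
    have : Ω ⊆ {∅} := by
      intro ω hω
      simp [Finset.card_eq_zero.mp (hsets ω hω)]
    calc Ω.card ≤ ({∅} : Finset (Finset ℕ)).card := Finset.card_le_card this
    _ = 1 := rfl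
  | succ h ih =>
    intro k Ω hsets hΩ
    -- k = 0 : empty sunflower
    rcases Nat.eq_zero_or_pos k with rfl | hk0
    · exact absurd ⟨∅, Finset.empty_subset _, rfl, ∅, by simp⟩ hΩ
    -- Ω empty : trivial
    rcases Finset.eq_empty_or_nonempty Ω with rfl | hΩne
    · simp
    -- k = 1 : singleton sunflower
    rcases Nat.lt_or_ge k 2 with hk1 | hk2
    · interval_cases k
      obtain ⟨ω, hω⟩ := hΩne
      exact absurd ⟨{ω}, Finset.singleton_subset_iff.mpr hω, rfl, ∅, by
        intro x hx y hy hxy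
        simp only [Finset.mem_singleton] at hx hy
        exact absurd (hx.trans hy.symm) hxy⟩ hΩ
    -- main case
    classical
    -- maximal pairwise disjoint subfamily
    set T : Finset (Finset (Finset ℕ)) :=
      Ω.powerset.filter (fun A => ∀ x ∈ A, ∀ y ∈ A, x ≠ y → x ∩ y = ∅) with hT
    have hTne : T.Nonempty := ⟨∅, by simp [hT]⟩
    obtain ⟨A, hAT, hAmax⟩ := T.exists_max_image Finset.card hTne
    have hAΩ : A ⊆ Ω := Finset.mem_powerset.mp (Finset.mem_filter.mp hAT).1
    have hAdisj : ∀ x ∈ A, ∀ y ∈ A, x ≠ y → x ∩ y = ∅ :=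
      (Finset.mem_filter.mp hAT).2
    -- A has at most k-1 elements
    have hAcard : A.card ≤ k - 1 := by
      by_contra hc
      push_neg at hc
      have : k ≤ A.card := by omega
      obtain ⟨P, hPA, hPcard⟩ := Finset.exists_subset_card_eq this
      exact hΩ ⟨P, hPA.trans hAΩ, hPcard, ∅,
        fun x hx y hy hxy => hAdisj x (hPA hx) y (hPA hy) hxy⟩
    -- U = union of A
    set U : Finset ℕ := A.sup id with hU
    have hUcard : U.card ≤ (k - 1) * (h + 1) := by
      have h1 : U.card ≤ ∑ a ∈ A, a.card := by
        rw [hU, Finset.sup_eq_biUnion]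
        exact Finset.card_biUnion_le
      have h2 : ∑ a ∈ A, a.card = A.card * (h + 1) := by
        rw [Finset.sum_congr rfl (fun a ha => hsets a (hAΩ ha)), Finset.sum_const,
          smul_eq_mul]
      calc U.card ≤ A.card * (h + 1) := h1.trans_eq h2
      _ ≤ (k - 1) * (h + 1) := Nat.mul_le_mul_right _ hAcard
    -- every ω ∈ Ω meets U
    have hmeet : ∀ ω ∈ Ω, ∃ x ∈ U, x ∈ ω := by
      intro ω hω
      by_contra hc
      push_neg at hc
      have hωA : ω ∉ A := by
        intro hωA
        obtain ⟨x, hx⟩ := Finset.card_pos.mp (by rw [hsets ω hω]; omega)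
        exact hc x (Finset.mem_sup.mpr ⟨ω, hωA, hx⟩) hx
      have hins : insert ω A ∈ T := by
        rw [hT, Finset.mem_filter, Finset.mem_powerset]
        refine ⟨Finset.insert_subset hω hAΩ, ?_⟩
        have key : ∀ a ∈ A, ω ∩ a = ∅ := by
          intro a ha
          apply Finset.eq_empty_of_forall_notMem
          intro z hz
          obtain ⟨hz1, hz2⟩ := Finset.mem_inter.mp hz
          exact hc z (Finset.mem_sup.mpr ⟨a, ha, hz2⟩) hz1
        intro x hx y hy hxy
        rcases Finset.mem_insert.mp hx with hxe | hxA <;>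
          rcases Finset.mem_insert.mp hy with hye | hyA
        · exact absurd (hxe.trans hye.symm) hxy
        · rw [hxe]; exact key y hyA
        · rw [hye, Finset.inter_comm]; exact key x hxA
        · exact hAdisj x hxA y hyA hxy
      have := hAmax _ hins
      rw [Finset.card_insert_of_notMem hωA] at this
      omega
    -- Ω covered by the filters
    have hcover : Ω ⊆ U.biUnion (fun x => Ω.filter (fun ω => x ∈ ω)) := by
      intro ω hω
      obtain ⟨x, hxU, hxω⟩ := hmeet ω hω
      exact Finset.mem_biUnion.mpr ⟨x, hxU, Finset.mem_filter.mpr ⟨hω, hxω⟩⟩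
    -- bound each filter via IH
    have hfilter : ∀ x, (Ω.filter (fun ω => x ∈ ω)).card ≤
        h.factorial * (k - 1) ^ h := by
      intro x
      set Ω' : Finset (Finset ℕ) :=
        (Ω.filter (fun ω => x ∈ ω)).image (fun ω => ω.erase x) with hΩ'
      have hinj : ∀ a ∈ Ω.filter (fun ω => x ∈ ω), ∀ b ∈ Ω.filter (fun ω => x ∈ ω),
          a.erase x = b.erase x → a = b := by
        intro a ha b hb hab
        have hxa := (Finset.mem_filter.mp ha).2
        have hxb := (Finset.mem_filter.mp hb).2
        rw [← Finset.insert_erase hxa, ← Finset.insert_erase hxb, hab]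
      have hcardeq : Ω'.card = (Ω.filter (fun ω => x ∈ ω)).card :=
        Finset.card_image_of_injOn hinj
      rw [← hcardeq]
      apply ih k Ω'
      · intro ω' hω'
        obtain ⟨ω, hω, rfl⟩ := Finset.mem_image.mp hω'
        rw [Finset.card_erase_of_mem (Finset.mem_filter.mp hω).2,
          hsets ω (Finset.mem_filter.mp hω).1]
        omega
      · rintro ⟨P, hPΩ', hPcard, C, hC⟩
        apply hΩ
        refine ⟨P.image (insert x), ?_, ?_, insert x C, ?_⟩
        · intro ω hω
          obtain ⟨p, hp, rfl⟩ := Finset.mem_image.mp hω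
          obtain ⟨ω₀, hω₀, rfl⟩ := Finset.mem_image.mp (hPΩ' hp)
          rw [Finset.insert_erase (Finset.mem_filter.mp hω₀).2]
          exact (Finset.mem_filter.mp hω₀).1
        · rw [Finset.card_image_of_injOn, hPcard]
          intro a ha b hb hab
          have hxa : x ∉ a := by
            obtain ⟨ω₀, _, rfl⟩ := Finset.mem_image.mp (hPΩ' ha)
            exact Finset.notMem_erase x ω₀
          have hxb : x ∉ b := by
            obtain ⟨ω₀, _, rfl⟩ := Finset.mem_image.mp (hPΩ' hb)
            exact Finset.notMem_erase x ω₀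
          rw [← Finset.erase_insert hxa, ← Finset.erase_insert hxb, hab]
        · intro u hu v hv huv
          obtain ⟨a, ha, rfl⟩ := Finset.mem_image.mp hu
          obtain ⟨b, hb, rfl⟩ := Finset.mem_image.mp hv
          have hab : a ≠ b := fun e => huv (by rw [e])
          rw [← Finset.insert_inter_distrib, hC a ha b hb hab]
    calc Ω.card ≤ (U.biUnion (fun x => Ω.filter (fun ω => x ∈ ω))).card :=
        Finset.card_le_card hcover
    _ ≤ ∑ x ∈ U, (Ω.filter (fun ω => x ∈ ω)).card := Finset.card_biUnion_le
    _ ≤ ∑ _x ∈ U, h.factorial * (k - 1) ^ h :=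
        Finset.sum_le_sum (fun x _ => hfilter x)
    _ = U.card * (h.factorial * (k - 1) ^ h) := by
        rw [Finset.sum_const, smul_eq_mul]
    _ ≤ ((k - 1) * (h + 1)) * (h.factorial * (k - 1) ^ h) :=
        Nat.mul_le_mul_right _ hUcard
    _ = (h + 1).factorial * (k - 1) ^ (h + 1) := by
        rw [Nat.factorial_succ, pow_succ]
        ring

theorem stmt_10 (h k : ℕ) (Ω : Finset (Finset ℕ))
    (hsets : ∀ ω ∈ Ω, ω.card = h)
    (hΩ : ¬ ∃ P ⊆ Ω, P.card = k ∧ ∃ C : Finset ℕ,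
        ∀ x ∈ P, ∀ y ∈ P, x ≠ y → x ∩ y = C) :
    Ω.card ≤ h.factorial * (k - 1) ^ h := by
  exact sunflower_aux h k Ω hsets hΩ
end

section
/- Let p be a prime with p > 7·L² for some positive real L, and let ω ∈ F_p with ω² + ω + 1 = 0 (assuming p ≡ 1 mod 3). If c₃, c₄ are integers with |c₃|, |c₄| ≤ L and c₄ ≡ −c₃ω² (mod p), then c₃ = c₄ = 0. -/
/-!
Reducing the congruence modulo `p` with `ω² + ω + 1 = 0` shows that `p` divides the integer
`c₃² - c₃c₄ + c₄²`. This value of the positive definite form `x² - xy + y²` lies in `[0, 3L²]`,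
and `3L² < p`, so it vanishes, which forces `c₃ = c₄ = 0`.
-/

theorem sq_sub_mul_add_sq_eq_zero_of_eq_neg_mul_sq {R : Type*} [CommRing R] {ω a b : R}
    (hω : ω ^ 2 + ω + 1 = 0) (hb : b = -a * ω ^ 2) : a ^ 2 - a * b + b ^ 2 = 0 := by
  have hω3 : ω ^ 3 = 1 := by linear_combination (ω - 1) * hω
  rw [hb]
  linear_combination a ^ 2 * hω + a ^ 2 * ω * hω3

section OrderedRing

variable {R : Type*} [CommRing R] [LinearOrder R] [IsStrictOrderedRing R]

theorem sq_sub_mul_add_sq_nonneg (a b : R) : 0 ≤ a ^ 2 - a * b + b ^ 2 := by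
  nlinarith [sq_nonneg (a - b), sq_nonneg a, sq_nonneg b]

theorem eq_zero_and_eq_zero_of_sq_sub_mul_add_sq_eq_zero {a b : R}
    (h : a ^ 2 - a * b + b ^ 2 = 0) : a = 0 ∧ b = 0 := by
  constructor <;> nlinarith [sq_nonneg (a - b), sq_nonneg a, sq_nonneg b]

theorem sq_sub_mul_add_sq_le_of_abs_le {a b L : R} (ha : |a| ≤ L) (hb : |b| ≤ L) :
    a ^ 2 - a * b + b ^ 2 ≤ 3 * L ^ 2 := by
  have ha2 : a ^ 2 ≤ L ^ 2 := sq_le_sq' (abs_le.mp ha).1 (abs_le.mp ha).2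
  have hb2 : b ^ 2 ≤ L ^ 2 := sq_le_sq' (abs_le.mp hb).1 (abs_le.mp hb).2
  have hab : -(a * b) ≤ L ^ 2 := by
    calc -(a * b) ≤ |a| * |b| := by rw [← abs_mul]; exact neg_le_abs _
      _ ≤ L ^ 2 := by rw [sq]; exact mul_le_mul ha hb (abs_nonneg b) ((abs_nonneg a).trans ha)
  linarith

end OrderedRing

theorem stmt_12_general (p : ℕ) (L : ℝ)
    (hpL : 7 * L ^ 2 < (p : ℝ)) (ω : ZMod p) (hω : ω ^ 2 + ω + 1 = 0)
    (c₃ c₄ : ℤ) (hc₃ : |(c₃ : ℝ)| ≤ L) (hc₄ : |(c₄ : ℝ)| ≤ L)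
    (hcong : (c₄ : ZMod p) = -(c₃ : ZMod p) * ω ^ 2) :
    c₃ = 0 ∧ c₄ = 0 := by
  set N : ℤ := c₃ ^ 2 - c₃ * c₄ + c₄ ^ 2 with hN
  have hdvd : (p : ℤ) ∣ N := by
    rw [← ZMod.intCast_zmod_eq_zero_iff_dvd]
    push_cast [hN]
    exact sq_sub_mul_add_sq_eq_zero_of_eq_neg_mul_sq hω hcong
  have hN_le : (N : ℝ) ≤ 3 * L ^ 2 := by
    push_cast [hN]
    exact sq_sub_mul_add_sq_le_of_abs_le hc₃ hc₄
  have hN_lt : |N| < p := by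
    rw [abs_of_nonneg (sq_sub_mul_add_sq_nonneg c₃ c₄)]
    have : (N : ℝ) < p := by linarith [sq_nonneg L]
    exact_mod_cast this
  exact eq_zero_and_eq_zero_of_sq_sub_mul_add_sq_eq_zero (Int.eq_zero_of_abs_lt_dvd hdvd hN_lt)

theorem stmt_12 (p : ℕ) [Fact p.Prime] (hp3 : p % 3 = 1) (L : ℝ) (hL : 0 < L)
    (hpL : 7 * L ^ 2 < (p : ℝ)) (ω : ZMod p) (hω : ω ^ 2 + ω + 1 = 0)
    (c₃ c₄ : ℤ) (hc₃ : |(c₃ : ℝ)| ≤ L) (hc₄ : |(c₄ : ℝ)| ≤ L)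
    (hcong : (c₄ : ZMod p) = -(c₃ : ZMod p) * ω ^ 2) :
    c₃ = 0 ∧ c₄ = 0 :=
  stmt_12_general p L hpL ω hω c₃ c₄ hc₃ hc₄ hcong
end

section
/- For γ = 7/11 there is a constant C such that for all positive integers n, Σ_{x₁ < n} x₁^{-γ} Σ_{x₂+x₃ = n−x₁} (x₂x₃)^{-γ} Σ_{x₂'+x₃' = n−x₁} (x₂'x₃')^{-γ} ≤ C n^{3−5γ} = C n^{-2/11}, where all variables are positive integers. -/
/-!
Telescoping `x ^ (-p)` against `(x + 1) ^ (1 - p) - x ^ (1 - p)` gives `∑_{x < N} x ^ (-p) ≪ N ^ (1 - p)`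
for `0 ≤ p < 1`. Since one of `x`, `m - x` is at least `m / 2`, this yields the convolution bound
`∑_{x + y = m} x ^ (-p) * y ^ (-q) ≪ m ^ (1 - p - q)`. With `p = q = γ` each inner sum is
`≪ (n - x₁) ^ (1 - 2γ)`, so the outer sum is a convolution with exponents `γ` and `2 (2γ - 1) = 6/11`,
hence `≪ n ^ (3 - 5γ)`.
-/

open Finset Real

lemma rpow_neg_le_two_mul_rpow_neg_of_half_le {m t r : ℝ} (hm : 0 < m) (ht : m / 2 ≤ t)
    (hr0 : 0 ≤ r) (hr1 : r ≤ 1) : t ^ (-r) ≤ 2 * m ^ (-r) :=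
  calc t ^ (-r) ≤ (m / 2) ^ (-r) := rpow_le_rpow_of_nonpos (by positivity) ht (by linarith)
    _ = 2 ^ r * m ^ (-r) := by
        rw [div_rpow hm.le zero_le_two, rpow_neg zero_le_two, div_inv_eq_mul, mul_comm]
    _ ≤ 2 * m ^ (-r) := by
        gcongr
        simpa using rpow_le_rpow_of_exponent_le one_le_two hr1

lemma rpow_neg_le_mul_rpow_sub_rpow {p x : ℝ} (hp0 : 0 ≤ p) (hp1 : p < 1) (hx : 1 ≤ x) :
    x ^ (-p) ≤ 2 / (1 - p) * ((x + 1) ^ (1 - p) - x ^ (1 - p)) := by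
  have hx1 : 0 < x + 1 := by linarith
  have hconcave : (1 - p) * (x + 1) ^ (-p) ≤ (x + 1) ^ (1 - p) - x ^ (1 - p) := by
    have hinv : (x + 1)⁻¹ ≤ 1 := inv_le_one_of_one_le₀ (by linarith)
    have hbern := rpow_one_add_le_one_add_mul_self (s := -(x + 1)⁻¹) (by linarith)
      (by linarith : 0 ≤ 1 - p) (by linarith : 1 - p ≤ 1)
    have hsplit : x = (x + 1) * (1 + -(x + 1)⁻¹) := by field_simp; ring
    have hpow : (x + 1) ^ (1 - p) * (x + 1)⁻¹ = (x + 1) ^ (-p) := by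
      rw [← rpow_neg_one, ← rpow_add hx1]; ring_nf
    calc (1 - p) * (x + 1) ^ (-p)
        = (x + 1) ^ (1 - p) - (x + 1) ^ (1 - p) * (1 + (1 - p) * -(x + 1)⁻¹) := by
          rw [← hpow]; ring
      _ ≤ (x + 1) ^ (1 - p) - (x + 1) ^ (1 - p) * (1 + -(x + 1)⁻¹) ^ (1 - p) := by gcongr
      _ = (x + 1) ^ (1 - p) - x ^ (1 - p) := by
          rw [← mul_rpow hx1.le (by linarith), ← hsplit]
  have hhalf : x ^ (-p) ≤ 2 * (x + 1) ^ (-p) :=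
    rpow_neg_le_two_mul_rpow_neg_of_half_le hx1 (by linarith) hp0 hp1.le
  calc x ^ (-p) ≤ 2 * (x + 1) ^ (-p) := hhalf
    _ = 2 / (1 - p) * ((1 - p) * (x + 1) ^ (-p)) := by field_simp [(by linarith : 1 - p ≠ 0)]
    _ ≤ 2 / (1 - p) * ((x + 1) ^ (1 - p) - x ^ (1 - p)) := by gcongr

lemma sum_Ico_rpow_neg_le {p : ℝ} (hp0 : 0 ≤ p) (hp1 : p < 1) (N : ℕ) :
    ∑ x ∈ Ico 1 N, (x : ℝ) ^ (-p) ≤ 2 / (1 - p) * (N : ℝ) ^ (1 - p) := by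
  induction N with
  | zero => simp [zero_rpow (by linarith : 1 - p ≠ 0)]
  | succ N ih =>
    rcases Nat.eq_zero_or_pos N with rfl | hN
    · simp only [Ico_self, sum_empty]
      have : 0 < 1 - p := by linarith
      positivity
    rw [sum_Ico_succ_top hN]
    have := rpow_neg_le_mul_rpow_sub_rpow hp0 hp1 (Nat.one_le_cast.mpr hN)
    push_cast
    linarith

lemma rpow_neg_mul_rpow_neg_le_s15 {a b m p q : ℝ} (ha : 0 ≤ a) (hb : 0 ≤ b) (hm : 0 < m)
    (hab : m ≤ a + b) (hp0 : 0 ≤ p) (hp1 : p ≤ 1) (hq0 : 0 ≤ q) (hq1 : q ≤ 1) :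
    a ^ (-p) * b ^ (-q) ≤ 2 * m ^ (-q) * a ^ (-p) + 2 * m ^ (-p) * b ^ (-q) := by
  have := rpow_nonneg ha (-p)
  have := rpow_nonneg hb (-q)
  have := rpow_nonneg hm.le (-p)
  have := rpow_nonneg hm.le (-q)
  rcases le_total (m / 2) b with hb2 | ha2
  · have := rpow_neg_le_two_mul_rpow_neg_of_half_le hm hb2 hq0 hq1
    nlinarith
  · have := rpow_neg_le_two_mul_rpow_neg_of_half_le hm (by linarith : m / 2 ≤ a) hp0 hp1
    nlinarith

noncomputable def negRpowConv (p q : ℝ) (m : ℕ) : ℝ :=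
  ∑ x ∈ Ico 1 m, (x : ℝ) ^ (-p) * ((m - x : ℕ) : ℝ) ^ (-q)

lemma negRpowConv_nonneg (p q : ℝ) (m : ℕ) : 0 ≤ negRpowConv p q m :=
  sum_nonneg fun _ _ => by positivity

lemma negRpowConv_le {p q : ℝ} (hp0 : 0 ≤ p) (hp1 : p < 1) (hq0 : 0 ≤ q) (hq1 : q < 1)
    (m : ℕ) : negRpowConv p q m ≤ (4 / (1 - p) + 4 / (1 - q)) * (m : ℝ) ^ (1 - p - q) := by
  rcases Nat.eq_zero_or_pos m with rfl | hm
  · rw [negRpowConv, Ico_eq_empty_of_le zero_le_one, sum_empty]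
    have : 0 < 1 - p := by linarith
    have : 0 < 1 - q := by linarith
    positivity
  have hm' : (0 : ℝ) < m := by exact_mod_cast hm
  have hreflect : ∑ x ∈ Ico 1 m, ((m - x : ℕ) : ℝ) ^ (-q) = ∑ x ∈ Ico 1 m, (x : ℝ) ^ (-q) := by
    rw [sum_Ico_reflect (fun x : ℕ => (x : ℝ) ^ (-q)) _ m.le_succ, Nat.add_sub_cancel_left,
      Nat.add_sub_cancel]
  calc negRpowConv p q m
      ≤ ∑ x ∈ Ico 1 m, (2 * (m : ℝ) ^ (-q) * (x : ℝ) ^ (-p) +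
          2 * (m : ℝ) ^ (-p) * ((m - x : ℕ) : ℝ) ^ (-q)) := by
        refine sum_le_sum fun x hx => rpow_neg_mul_rpow_neg_le_s15 (by positivity) (by positivity)
          hm' ?_ hp0 hp1.le hq0 hq1.le
        rw [Nat.cast_sub (mem_Ico.mp hx).2.le]
        linarith
    _ = 2 * (m : ℝ) ^ (-q) * ∑ x ∈ Ico 1 m, (x : ℝ) ^ (-p) +
          2 * (m : ℝ) ^ (-p) * ∑ x ∈ Ico 1 m, (x : ℝ) ^ (-q) := by
        rw [sum_add_distrib, ← mul_sum, ← mul_sum, hreflect]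
    _ ≤ 2 * (m : ℝ) ^ (-q) * (2 / (1 - p) * (m : ℝ) ^ (1 - p)) +
          2 * (m : ℝ) ^ (-p) * (2 / (1 - q) * (m : ℝ) ^ (1 - q)) := by
        gcongr
        · exact sum_Ico_rpow_neg_le hp0 hp1 m
        · exact sum_Ico_rpow_neg_le hq0 hq1 m
    _ = 4 / (1 - p) * ((m : ℝ) ^ (-q) * (m : ℝ) ^ (1 - p)) +
          4 / (1 - q) * ((m : ℝ) ^ (-p) * (m : ℝ) ^ (1 - q)) := by ring
    _ = (4 / (1 - p) + 4 / (1 - q)) * (m : ℝ) ^ (1 - p - q) := by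
        rw [← rpow_add hm', ← rpow_add hm']
        ring_nf

theorem stmt_15 :
    ∃ C : ℝ, 0 < C ∧ ∀ n : ℕ, 0 < n →
      ∑ x₁ ∈ Finset.Ico 1 n, (x₁ : ℝ) ^ (-(7 / 11 : ℝ)) *
          (∑ x₂ ∈ Finset.Ico 1 (n - x₁),
              (x₂ : ℝ) ^ (-(7 / 11 : ℝ)) * ((n - x₁ - x₂ : ℕ) : ℝ) ^ (-(7 / 11 : ℝ))) *
          (∑ x₂' ∈ Finset.Ico 1 (n - x₁),
              (x₂' : ℝ) ^ (-(7 / 11 : ℝ)) * ((n - x₁ - x₂' : ℕ) : ℝ) ^ (-(7 / 11 : ℝ)))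
        ≤ C * (n : ℝ) ^ (-(2 / 11 : ℝ)) := by
  have hinner (m : ℕ) : negRpowConv (7 / 11) (7 / 11) m ≤ 22 * (m : ℝ) ^ (-(3 / 11 : ℝ)) := by
    convert negRpowConv_le (p := 7 / 11) (q := 7 / 11) (by norm_num) (by norm_num) (by norm_num)
      (by norm_num) m using 2 <;> norm_num
  have houter (n : ℕ) : negRpowConv (7 / 11) (6 / 11) n ≤ 99 / 5 * (n : ℝ) ^ (-(2 / 11 : ℝ)) := by
    convert negRpowConv_le (p := 7 / 11) (q := 6 / 11) (by norm_num) (by norm_num) (by norm_num)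
      (by norm_num) n using 2 <;> norm_num
  refine ⟨22 ^ 2 * (99 / 5), by norm_num, fun n _ => ?_⟩
  calc ∑ x ∈ Ico 1 n, (x : ℝ) ^ (-(7 / 11 : ℝ)) * negRpowConv (7 / 11) (7 / 11) (n - x) *
        negRpowConv (7 / 11) (7 / 11) (n - x)
      ≤ ∑ x ∈ Ico 1 n, (x : ℝ) ^ (-(7 / 11 : ℝ)) * (22 * ((n - x : ℕ) : ℝ) ^ (-(3 / 11 : ℝ))) *
          (22 * ((n - x : ℕ) : ℝ) ^ (-(3 / 11 : ℝ))) := by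
        gcongr with x
        · exact negRpowConv_nonneg _ _ _
        · exact hinner _
        · exact hinner _
    _ = 22 ^ 2 * negRpowConv (7 / 11) (6 / 11) n := by
        rw [negRpowConv, mul_sum]
        refine sum_congr rfl fun x hx => ?_
        have hpos : (0 : ℝ) < (n - x : ℕ) := by exact_mod_cast Nat.sub_pos_of_lt (mem_Ico.mp hx).2
        rw [show -(6 / 11 : ℝ) = -(3 / 11) + -(3 / 11) by norm_num, rpow_add hpos]
        ring
    _ ≤ 22 ^ 2 * (99 / 5) * (n : ℝ) ^ (-(2 / 11 : ℝ)) := by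
        rw [mul_assoc]
        exact mul_le_mul_of_nonneg_left (houter n) (by norm_num)
end

section
/- For every 2/3 < γ < 1 there exists a constant C (depending only on γ) such that for all positive integers r and nonnegative integers m, Σ_{x,y,z > m, x+y−z = r} (xyz)^{-γ} ≤ C (r+m)^{2−3γ}. -/
open Finset Set

/-- head estimate: ∑_{k=1}^N k^{-γ} ≤ (2/(1-γ)) N^{1-γ} -/
lemma headA {γ : ℝ} (hγ0 : 0 < γ) (hγ1 : γ < 1) (N : ℕ) (hN : 1 ≤ N) :
    ∑ k ∈ Finset.Ico 1 (N + 1), (k : ℝ) ^ (-γ) ≤ (2 / (1 - γ)) * (N : ℝ) ^ (1 - γ) := by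
  have hd : (0:ℝ) < 1 - γ := by linarith
  obtain ⟨n, rfl⟩ : ∃ n, N = n + 1 := ⟨N - 1, (Nat.succ_pred_eq_of_pos hN).symm⟩
  rw [Finset.sum_Ico_eq_sum_range]
  have h1 : n + 1 + 1 - 1 = n + 1 := by omega
  rw [h1, Finset.sum_range_succ']
  have hint : ∑ i ∈ Finset.range n, ((1 + (i + 1) : ℕ) : ℝ) ^ (-γ)
      ≤ (((n:ℝ) + 1) ^ (1 - γ) - 1) / (1 - γ) := by
    have hanti : AntitoneOn (fun x : ℝ => x ^ (-γ)) (Set.Icc (1:ℝ) (1 + n)) := by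
      intro x hx y hy hxy
      exact Real.rpow_le_rpow_of_nonpos (lt_of_lt_of_le one_pos hx.1) hxy (by linarith)
    have := hanti.sum_le_integral
    have hintval : (∫ x in (1:ℝ)..(1 + n), x ^ (-γ))
        = (((n:ℝ) + 1) ^ (1 - γ) - 1) / (1 - γ) := by
      rw [integral_rpow (Or.inl (by linarith))]
      rw [Real.one_rpow]
      ring_nf
    calc ∑ i ∈ Finset.range n, ((1 + (i + 1) : ℕ) : ℝ) ^ (-γ)
        = ∑ i ∈ Finset.range n, ((1:ℝ) + ((i + 1 : ℕ) : ℝ)) ^ (-γ) := by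
          apply Finset.sum_congr rfl; intro i _; push_cast; ring_nf
      _ ≤ ∫ x in (1:ℝ)..(1 + n), x ^ (-γ) := this
      _ = (((n:ℝ) + 1) ^ (1 - γ) - 1) / (1 - γ) := hintval
  have h10 : ((1 + 0 : ℕ) : ℝ) ^ (-γ) = 1 := by norm_num
  rw [h10]
  have hP : (1:ℝ) ≤ ((n:ℝ) + 1) ^ (1 - γ) := by
    apply Real.one_le_rpow (by push_cast; linarith) (by linarith)
  have hcast : ((n + 1 : ℕ) : ℝ) = (n:ℝ) + 1 := by push_cast; ring
  rw [hcast]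
  set P := ((n:ℝ) + 1) ^ (1 - γ) with hPdef
  have : (P - 1) / (1 - γ) + 1 ≤ 2 / (1 - γ) * P := by
    rw [div_add' _ _ _ (ne_of_gt hd), div_le_iff₀ hd]
    have h2 : 2 / (1 - γ) * P * (1 - γ) = 2 * P := by field_simp
    rw [h2]; nlinarith
  linarith [hint]

/-- tail estimate: ∑_{w≥0} (K+w)^{-s} ≤ (1+1/(s-1)) K^{1-s} for s>1, K≥1 -/
lemma tailB {s : ℝ} (hs : 1 < s) (K : ℕ) (hK : 1 ≤ K) :
    ∑' w : ℕ, ((K + w : ℕ) : ℝ) ^ (-s) ≤ (1 + 1 / (s - 1)) * (K : ℝ) ^ (1 - s) := by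
  have hs1 : (0:ℝ) < s - 1 := by linarith
  have hKR : (1:ℝ) ≤ (K:ℝ) := by exact_mod_cast hK
  have hKpos : (0:ℝ) < K := by linarith
  have hbase : Summable (fun n : ℕ => (n : ℝ) ^ (-s)) :=
    Real.summable_nat_rpow.mpr (by linarith)
  have heq : (fun w : ℕ => ((K + w : ℕ) : ℝ) ^ (-s))
      = fun w : ℕ => ((w + K : ℕ) : ℝ) ^ (-s) := by
    funext w; rw [Nat.add_comm]
  have hsum : Summable (fun w : ℕ => ((K + w : ℕ) : ℝ) ^ (-s)) := by
    rw [heq]; exact (summable_nat_add_iff K).mpr hbase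
  rw [Summable.tsum_eq_zero_add hsum]
  have h0 : ((K + 0 : ℕ) : ℝ) ^ (-s) = (K:ℝ) ^ (-s) := by norm_num
  rw [h0]
  have htail : ∑' w : ℕ, ((K + (w + 1) : ℕ) : ℝ) ^ (-s) ≤ (K:ℝ) ^ (1 - s) / (s - 1) := by
    apply Real.tsum_le_of_sum_range_le (fun n => Real.rpow_nonneg (Nat.cast_nonneg _) _)
    intro n
    have hanti : AntitoneOn (fun x : ℝ => x ^ (-s)) (Set.Icc (K:ℝ) ((K:ℝ) + n)) := by
      intro x hx y hy hxy
      exact Real.rpow_le_rpow_of_nonpos (lt_of_lt_of_le hKpos hx.1) hxy (by linarith)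
    have hle := hanti.sum_le_integral
    have hintval : (∫ x in (K:ℝ)..((K:ℝ) + n), x ^ (-s))
        = ((K:ℝ) ^ (1 - s) - ((K:ℝ) + n) ^ (1 - s)) / (s - 1) := by
      rw [integral_rpow (Or.inr ⟨by intro h; linarith,
        Set.notMem_uIcc_of_lt hKpos (by positivity)⟩)]
      have he : -s + 1 = 1 - s := by ring
      rw [he, div_eq_div_iff (by linarith : (1:ℝ) - s ≠ 0) (ne_of_gt hs1)]
      ring
    calc ∑ w ∈ Finset.range n, ((K + (w + 1) : ℕ) : ℝ) ^ (-s)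
        = ∑ w ∈ Finset.range n, ((K:ℝ) + ((w + 1 : ℕ) : ℝ)) ^ (-s) := by
          apply Finset.sum_congr rfl; intro w _; push_cast; ring_nf
      _ ≤ ∫ x in (K:ℝ)..((K:ℝ) + n), x ^ (-s) := hle
      _ = ((K:ℝ) ^ (1 - s) - ((K:ℝ) + n) ^ (1 - s)) / (s - 1) := hintval
      _ ≤ (K:ℝ) ^ (1 - s) / (s - 1) := by
          rw [div_le_div_iff_of_pos_right hs1]
          linarith [Real.rpow_nonneg (by positivity : (0:ℝ) ≤ (K:ℝ) + n) (1 - s)]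
  have hKs : (K:ℝ) ^ (-s) ≤ (K:ℝ) ^ (1 - s) :=
    Real.rpow_le_rpow_of_exponent_le hKR (by linarith)
  calc (K:ℝ) ^ (-s) + ∑' w : ℕ, ((K + (w + 1) : ℕ) : ℝ) ^ (-s)
      ≤ (K:ℝ) ^ (1 - s) + (K:ℝ) ^ (1 - s) / (s - 1) := add_le_add hKs htail
    _ = (1 + 1 / (s - 1)) * (K:ℝ) ^ (1 - s) := by ring

/-- comparison of a sum over injected indices with headA -/
lemma sum_comp_le {γ : ℝ} (hγ0 : 0 < γ) (hγ1 : γ < 1) (s : Finset ℕ) (φ : ℕ → ℕ)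
    (hinj : ∀ x ∈ s, ∀ y ∈ s, φ x = φ y → x = y) (N : ℕ) (hN : 1 ≤ N)
    (hmem : ∀ x ∈ s, φ x ∈ Finset.Ico 1 (N + 1)) :
    ∑ x ∈ s, ((φ x : ℕ) : ℝ) ^ (-γ) ≤ (2 / (1 - γ)) * (N : ℝ) ^ (1 - γ) := by
  have himg := Finset.sum_image (f := fun k : ℕ => (k:ℝ) ^ (-γ)) (g := φ) (s := s) hinj
  rw [← himg]
  refine le_trans (Finset.sum_le_sum_of_subset_of_nonneg ?_ ?_) (headA hγ0 hγ1 N hN)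
  · intro y hy
    obtain ⟨x, hx, rfl⟩ := Finset.mem_image.mp hy
    exact hmem x hx
  · intro i _ _
    exact Real.rpow_nonneg (Nat.cast_nonneg _) _

lemma aux1 {γ : ℝ} (hγ0 : 0 ≤ γ) (hγ1 : γ ≤ 1) {a b : ℝ} (ha : 0 < a) (hb : 0 < b)
    (hab : a ≤ b) : b ^ (-γ) ≤ 2 * (a + b) ^ (-γ) := by
  have h2b : (0:ℝ) < 2 * b := by linarith
  have h1 : (2 * b) ^ (-γ) ≤ (a + b) ^ (-γ) :=
    Real.rpow_le_rpow_of_nonpos (by linarith) (by linarith) (by linarith)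
  have h3 : ((2:ℝ) * b) ^ (-γ) = 2 ^ (-γ) * b ^ (-γ) :=
    Real.mul_rpow (by norm_num) hb.le
  have h4 : b ^ (-γ) = 2 ^ γ * (2 * b) ^ (-γ) := by
    rw [h3, ← mul_assoc, ← Real.rpow_add (by norm_num : (0:ℝ) < 2)]
    norm_num
  have h5 : (2:ℝ) ^ γ ≤ 2 := by
    calc (2:ℝ) ^ γ ≤ 2 ^ (1:ℝ) := Real.rpow_le_rpow_of_exponent_le one_le_two hγ1
      _ = 2 := Real.rpow_one 2
  calc b ^ (-γ) = 2 ^ γ * (2 * b) ^ (-γ) := h4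
    _ ≤ 2 ^ γ * (a + b) ^ (-γ) := by
        apply mul_le_mul_of_nonneg_left h1 (Real.rpow_nonneg (by norm_num) _)
    _ ≤ 2 * (a + b) ^ (-γ) :=
        mul_le_mul_of_nonneg_right h5 (Real.rpow_nonneg (by linarith) _)

lemma prod_bound {γ : ℝ} (hγ0 : 0 ≤ γ) (hγ1 : γ ≤ 1) {a b : ℝ} (ha : 0 < a) (hb : 0 < b) :
    a ^ (-γ) * b ^ (-γ) ≤ 2 * (a + b) ^ (-γ) * (a ^ (-γ) + b ^ (-γ)) := by
  have hna : 0 ≤ a ^ (-γ) := Real.rpow_nonneg ha.le _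
  have hnb : 0 ≤ b ^ (-γ) := Real.rpow_nonneg hb.le _
  have hns : 0 ≤ (a + b) ^ (-γ) := Real.rpow_nonneg (by linarith) _
  rcases le_total a b with h | h
  · have := aux1 hγ0 hγ1 ha hb h
    nlinarith
  · have := aux1 hγ0 hγ1 hb ha h
    rw [add_comm b a] at this
    nlinarith

lemma inner_bound {γ : ℝ} (hγ0 : 0 < γ) (hγ1 : γ < 1) (r m z : ℕ) (hr : 0 < r) :
    ∑ x ∈ Finset.Ico (m + 1) (r + z + 1),
        (x : ℝ) ^ (-γ) * ((r + m + 1 + z - x : ℕ) : ℝ) ^ (-γ)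
      ≤ 8 / (1 - γ) * ((r + m + 1 + z : ℕ) : ℝ) ^ (1 - 2 * γ) := by
  set Nn := r + m + 1 + z with hNn
  have hNpos : (0:ℝ) < (Nn : ℝ) := by
    have : 0 < Nn := by omega
    exact_mod_cast this
  have hd : (0:ℝ) < 1 - γ := by linarith
  have key : ∀ x ∈ Finset.Ico (m + 1) (r + z + 1),
      (x : ℝ) ^ (-γ) * ((Nn - x : ℕ) : ℝ) ^ (-γ)
        ≤ 2 * (Nn : ℝ) ^ (-γ) * ((x : ℝ) ^ (-γ) + ((Nn - x : ℕ) : ℝ) ^ (-γ)) := by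
    intro x hx
    rw [Finset.mem_Ico] at hx
    have hxpos : (0:ℝ) < (x:ℝ) := by
      have : 0 < x := by omega
      exact_mod_cast this
    have hbpos : (0:ℝ) < ((Nn - x : ℕ) : ℝ) := by
      have : 0 < Nn - x := by omega
      exact_mod_cast this
    have habn : x + (Nn - x) = Nn := by omega
    have hsum : (x:ℝ) + ((Nn - x : ℕ) : ℝ) = (Nn : ℝ) := by
      rw [← Nat.cast_add, habn]
    have := prod_bound hγ0.le hγ1.le hxpos hbpos
    rwa [hsum] at this
  have hA : ∑ x ∈ Finset.Ico (m + 1) (r + z + 1), (x : ℝ) ^ (-γ)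
      ≤ 2 / (1 - γ) * (Nn : ℝ) ^ (1 - γ) := by
    apply sum_comp_le hγ0 hγ1 _ (fun x => x) (fun x _ y _ h => h) Nn (by omega)
    intro x hx
    rw [Finset.mem_Ico] at hx ⊢
    omega
  have hB : ∑ x ∈ Finset.Ico (m + 1) (r + z + 1), ((Nn - x : ℕ) : ℝ) ^ (-γ)
      ≤ 2 / (1 - γ) * (Nn : ℝ) ^ (1 - γ) := by
    apply sum_comp_le hγ0 hγ1 _ (fun x => Nn - x) ?_ Nn (by omega)
    · intro x hx
      rw [Finset.mem_Ico] at hx ⊢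
      omega
    · intro x hx y hy h
      have h' : Nn - x = Nn - y := h
      rw [Finset.mem_Ico] at hx hy
      omega
  have hmerge : (Nn:ℝ) ^ (-γ) * (Nn:ℝ) ^ (1 - γ) = (Nn:ℝ) ^ (1 - 2 * γ) := by
    rw [← Real.rpow_add hNpos]
    ring_nf
  calc ∑ x ∈ Finset.Ico (m + 1) (r + z + 1),
        (x : ℝ) ^ (-γ) * ((Nn - x : ℕ) : ℝ) ^ (-γ)
      ≤ ∑ x ∈ Finset.Ico (m + 1) (r + z + 1),
        2 * (Nn : ℝ) ^ (-γ) * ((x : ℝ) ^ (-γ) + ((Nn - x : ℕ) : ℝ) ^ (-γ)) :=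
        Finset.sum_le_sum key
    _ = 2 * (Nn : ℝ) ^ (-γ) *
        (∑ x ∈ Finset.Ico (m + 1) (r + z + 1), (x : ℝ) ^ (-γ)
         + ∑ x ∈ Finset.Ico (m + 1) (r + z + 1), ((Nn - x : ℕ) : ℝ) ^ (-γ)) := by
        rw [← Finset.mul_sum, Finset.sum_add_distrib]
    _ ≤ 2 * (Nn : ℝ) ^ (-γ) *
        (2 / (1 - γ) * (Nn : ℝ) ^ (1 - γ) + 2 / (1 - γ) * (Nn : ℝ) ^ (1 - γ)) := by
        apply mul_le_mul_of_nonneg_left (add_le_add hA hB)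
        positivity
    _ = 8 / (1 - γ) * ((Nn:ℝ) ^ (-γ) * (Nn:ℝ) ^ (1 - γ)) := by ring
    _ = 8 / (1 - γ) * (Nn : ℝ) ^ (1 - 2 * γ) := by rw [hmerge]

theorem stmt_17 (γ : ℝ) (hγ₁ : 2 / 3 < γ) (hγ₂ : γ < 1) :
    ∃ C : ℝ, 0 < C ∧ ∀ r m : ℕ, 0 < r →
      ∑' z : ℕ, ((m + 1 + z : ℕ) : ℝ) ^ (-γ) *
          (∑ x ∈ Finset.Ico (m + 1) (r + z + 1),
              (x : ℝ) ^ (-γ) * ((r + m + 1 + z - x : ℕ) : ℝ) ^ (-γ))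
        ≤ C * ((r + m : ℕ) : ℝ) ^ (2 - 3 * γ) := by
  have hγ0 : (0:ℝ) < γ := by linarith
  have hd : (0:ℝ) < 1 - γ := by linarith
  have hs2 : (0:ℝ) < 3 * γ - 2 := by linarith
  have hdne : (1 - γ) ≠ 0 := ne_of_gt hd
  have hc8 : (0:ℝ) ≤ 8 / (1 - γ) := (div_pos (by norm_num) hd).le
  refine ⟨32 / (1 - γ) ^ 2 + 8 / (1 - γ) * (1 + 1 / (3 * γ - 2)), ?_, ?_⟩
  · have h1 : (0:ℝ) < 32 / (1 - γ) ^ 2 := by positivity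
    have h2 : (0:ℝ) < 8 / (1 - γ) * (1 + 1 / (3 * γ - 2)) :=
      mul_pos (div_pos (by norm_num) hd) (by positivity)
    linarith
  intro r m hr
  have hT1 : 1 ≤ r + m := by omega
  have hTpos : (0:ℝ) < ((r + m : ℕ) : ℝ) := by
    have : 0 < r + m := by omega
    exact_mod_cast this
  set F : ℕ → ℝ := fun z => ((m + 1 + z : ℕ) : ℝ) ^ (-γ) *
      (∑ x ∈ Finset.Ico (m + 1) (r + z + 1),
          (x : ℝ) ^ (-γ) * ((r + m + 1 + z - x : ℕ) : ℝ) ^ (-γ)) with hF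
  set G : ℕ → ℝ := fun z => 8 / (1 - γ) * ((m + 1 + z : ℕ) : ℝ) ^ (-γ) *
      ((r + m + 1 + z : ℕ) : ℝ) ^ (1 - 2 * γ) with hG
  set H : ℕ → ℝ := fun z => 8 / (1 - γ) * ((m + 1 + z : ℕ) : ℝ) ^ (1 - 3 * γ) with hH
  have hmz : ∀ z : ℕ, (0:ℝ) < ((m + 1 + z : ℕ) : ℝ) := by
    intro z
    have : 0 < m + 1 + z := by omega
    exact_mod_cast this
  have hFnn : ∀ z, 0 ≤ F z := by
    intro z
    apply mul_nonneg (Real.rpow_nonneg (Nat.cast_nonneg _) _)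
    apply Finset.sum_nonneg
    intro x _
    exact mul_nonneg (Real.rpow_nonneg (Nat.cast_nonneg _) _)
      (Real.rpow_nonneg (Nat.cast_nonneg _) _)
  have hGnn : ∀ z, 0 ≤ G z := by
    intro z
    exact mul_nonneg (mul_nonneg hc8 (Real.rpow_nonneg (Nat.cast_nonneg _) _))
      (Real.rpow_nonneg (Nat.cast_nonneg _) _)
  have hFG : ∀ z, F z ≤ G z := by
    intro z
    have h1 := inner_bound hγ0 hγ₂ r m z hr
    calc F z ≤ ((m + 1 + z : ℕ) : ℝ) ^ (-γ) *
          (8 / (1 - γ) * ((r + m + 1 + z : ℕ) : ℝ) ^ (1 - 2 * γ)) :=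
        mul_le_mul_of_nonneg_left h1 (Real.rpow_nonneg (Nat.cast_nonneg _) _)
      _ = G z := by rw [hG]; ring
  have hGH : ∀ z, G z ≤ H z := by
    intro z
    have hle : ((m + 1 + z : ℕ) : ℝ) ≤ ((r + m + 1 + z : ℕ) : ℝ) := by
      exact_mod_cast (by omega : m + 1 + z ≤ r + m + 1 + z)
    have h1 : ((r + m + 1 + z : ℕ) : ℝ) ^ (1 - 2 * γ)
        ≤ ((m + 1 + z : ℕ) : ℝ) ^ (1 - 2 * γ) :=
      Real.rpow_le_rpow_of_nonpos (hmz z) hle (by linarith)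
    have hmerge : ((m + 1 + z : ℕ) : ℝ) ^ (-γ) * ((m + 1 + z : ℕ) : ℝ) ^ (1 - 2 * γ)
        = ((m + 1 + z : ℕ) : ℝ) ^ (1 - 3 * γ) := by
      rw [← Real.rpow_add (hmz z)]
      congr 1
      ring
    calc G z ≤ 8 / (1 - γ) * ((m + 1 + z : ℕ) : ℝ) ^ (-γ) *
          ((m + 1 + z : ℕ) : ℝ) ^ (1 - 2 * γ) :=
        mul_le_mul_of_nonneg_left h1
          (mul_nonneg hc8 (Real.rpow_nonneg (Nat.cast_nonneg _) _))
      _ = 8 / (1 - γ) * (((m + 1 + z : ℕ) : ℝ) ^ (-γ) *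
            ((m + 1 + z : ℕ) : ℝ) ^ (1 - 2 * γ)) := by ring
      _ = H z := by rw [hmerge, hH]
  have hHsum : Summable H := by
    have hb : Summable (fun n : ℕ => (n : ℝ) ^ (1 - 3 * γ)) :=
      Real.summable_nat_rpow.mpr (by linarith)
    have hb2 : Summable (fun z : ℕ => ((z + (m + 1) : ℕ) : ℝ) ^ (1 - 3 * γ)) :=
      (summable_nat_add_iff (f := fun n : ℕ => (n : ℝ) ^ (1 - 3 * γ)) (m + 1)).mpr hb
    have heqq : (fun z : ℕ => ((m + 1 + z : ℕ) : ℝ) ^ (1 - 3 * γ))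
        = fun z : ℕ => ((z + (m + 1) : ℕ) : ℝ) ^ (1 - 3 * γ) := by
      funext z; rw [Nat.add_comm]
    rw [hH]
    exact Summable.mul_left _ (by rw [heqq]; exact hb2)
  have hGsum : Summable G := Summable.of_nonneg_of_le hGnn hGH hHsum
  have hFsum : Summable F := Summable.of_nonneg_of_le hFnn hFG hGsum
  have step1 : ∑' z, F z ≤ ∑' z, G z := Summable.tsum_le_tsum hFG hFsum hGsum
  have split : ∑ z ∈ Finset.range (r + m), G z + ∑' w, G (w + (r + m)) = ∑' z, G z :=
    Summable.sum_add_tsum_nat_add (r + m) hGsum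
  -- Part A
  have hAsum : ∑ z ∈ Finset.range (r + m), ((m + 1 + z : ℕ) : ℝ) ^ (-γ)
      ≤ 2 / (1 - γ) * ((m + (r + m) : ℕ) : ℝ) ^ (1 - γ) := by
    apply sum_comp_le hγ0 hγ₂ _ (fun z => m + 1 + z) (by intro x _ y _ h; have h' : m + 1 + x = m + 1 + y := h; omega)
      (m + (r + m)) (by omega)
    intro x hx
    rw [Finset.mem_range] at hx
    rw [Finset.mem_Ico]
    omega
  have hmT : ((m + (r + m) : ℕ) : ℝ) ^ (1 - γ) ≤ 2 * ((r + m : ℕ) : ℝ) ^ (1 - γ) := by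
    have hcast : ((2 * (r + m) : ℕ) : ℝ) = 2 * ((r + m : ℕ) : ℝ) := by push_cast; ring
    calc ((m + (r + m) : ℕ) : ℝ) ^ (1 - γ) ≤ ((2 * (r + m) : ℕ) : ℝ) ^ (1 - γ) := by
          apply Real.rpow_le_rpow (Nat.cast_nonneg _) ?_ (by linarith)
          exact_mod_cast (by omega : m + (r + m) ≤ 2 * (r + m))
      _ = (2 * ((r + m : ℕ) : ℝ)) ^ (1 - γ) := by rw [hcast]
      _ = 2 ^ (1 - γ) * ((r + m : ℕ) : ℝ) ^ (1 - γ) :=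
          Real.mul_rpow (by norm_num) (Nat.cast_nonneg _)
      _ ≤ 2 * ((r + m : ℕ) : ℝ) ^ (1 - γ) := by
          apply mul_le_mul_of_nonneg_right ?_ (Real.rpow_nonneg (Nat.cast_nonneg _) _)
          calc (2:ℝ) ^ (1 - γ) ≤ 2 ^ (1:ℝ) :=
              Real.rpow_le_rpow_of_exponent_le one_le_two (by linarith)
            _ = 2 := Real.rpow_one 2
  have hmergeT : ((r + m : ℕ) : ℝ) ^ (1 - 2 * γ) * ((r + m : ℕ) : ℝ) ^ (1 - γ)
      = ((r + m : ℕ) : ℝ) ^ (2 - 3 * γ) := by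
    rw [← Real.rpow_add hTpos]
    congr 1
    ring
  have partA : ∑ z ∈ Finset.range (r + m), G z
      ≤ 32 / (1 - γ) ^ 2 * ((r + m : ℕ) : ℝ) ^ (2 - 3 * γ) := by
    have hGz : ∀ z ∈ Finset.range (r + m), G z
        ≤ 8 / (1 - γ) * ((r + m : ℕ) : ℝ) ^ (1 - 2 * γ) * ((m + 1 + z : ℕ) : ℝ) ^ (-γ) := by
      intro z _
      have hle : ((r + m : ℕ) : ℝ) ≤ ((r + m + 1 + z : ℕ) : ℝ) := by
        exact_mod_cast (by omega : r + m ≤ r + m + 1 + z)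
      have h1 : ((r + m + 1 + z : ℕ) : ℝ) ^ (1 - 2 * γ)
          ≤ ((r + m : ℕ) : ℝ) ^ (1 - 2 * γ) :=
        Real.rpow_le_rpow_of_nonpos hTpos hle (by linarith)
      calc G z ≤ 8 / (1 - γ) * ((m + 1 + z : ℕ) : ℝ) ^ (-γ) *
            ((r + m : ℕ) : ℝ) ^ (1 - 2 * γ) :=
          mul_le_mul_of_nonneg_left h1
            (mul_nonneg hc8 (Real.rpow_nonneg (Nat.cast_nonneg _) _))
        _ = 8 / (1 - γ) * ((r + m : ℕ) : ℝ) ^ (1 - 2 * γ) *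
            ((m + 1 + z : ℕ) : ℝ) ^ (-γ) := by ring
    calc ∑ z ∈ Finset.range (r + m), G z
        ≤ ∑ z ∈ Finset.range (r + m), 8 / (1 - γ) * ((r + m : ℕ) : ℝ) ^ (1 - 2 * γ) *
            ((m + 1 + z : ℕ) : ℝ) ^ (-γ) := Finset.sum_le_sum hGz
      _ = 8 / (1 - γ) * ((r + m : ℕ) : ℝ) ^ (1 - 2 * γ) *
            ∑ z ∈ Finset.range (r + m), ((m + 1 + z : ℕ) : ℝ) ^ (-γ) := by
          rw [Finset.mul_sum]
      _ ≤ 8 / (1 - γ) * ((r + m : ℕ) : ℝ) ^ (1 - 2 * γ) *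
            (2 / (1 - γ) * (2 * ((r + m : ℕ) : ℝ) ^ (1 - γ))) := by
          apply mul_le_mul_of_nonneg_left ?_
            (mul_nonneg hc8 (Real.rpow_nonneg (Nat.cast_nonneg _) _))
          calc ∑ z ∈ Finset.range (r + m), ((m + 1 + z : ℕ) : ℝ) ^ (-γ)
              ≤ 2 / (1 - γ) * ((m + (r + m) : ℕ) : ℝ) ^ (1 - γ) := hAsum
            _ ≤ 2 / (1 - γ) * (2 * ((r + m : ℕ) : ℝ) ^ (1 - γ)) :=
              mul_le_mul_of_nonneg_left hmT (div_pos (by norm_num) hd).le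
      _ = 32 / (1 - γ) ^ 2 * (((r + m : ℕ) : ℝ) ^ (1 - 2 * γ) *
            ((r + m : ℕ) : ℝ) ^ (1 - γ)) := by field_simp; ring
      _ = 32 / (1 - γ) ^ 2 * ((r + m : ℕ) : ℝ) ^ (2 - 3 * γ) := by rw [hmergeT]
  -- Part B
  have hbB : Summable (fun w : ℕ => 8 / (1 - γ) * (((r + m) + w : ℕ) : ℝ) ^ (-(3 * γ - 1))) := by
    have hb : Summable (fun n : ℕ => (n : ℝ) ^ (-(3 * γ - 1))) :=
      Real.summable_nat_rpow.mpr (by linarith)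
    have hb2 : Summable (fun w : ℕ => ((w + (r + m) : ℕ) : ℝ) ^ (-(3 * γ - 1))) :=
      (summable_nat_add_iff (f := fun n : ℕ => (n : ℝ) ^ (-(3 * γ - 1))) (r + m)).mpr hb
    have heqq : (fun w : ℕ => (((r + m) + w : ℕ) : ℝ) ^ (-(3 * γ - 1)))
        = fun w : ℕ => ((w + (r + m) : ℕ) : ℝ) ^ (-(3 * γ - 1)) := by
      funext w; rw [Nat.add_comm]
    exact Summable.mul_left _ (by rw [heqq]; exact hb2)
  have hGw : ∀ w : ℕ, G (w + (r + m))
      ≤ 8 / (1 - γ) * (((r + m) + w : ℕ) : ℝ) ^ (-(3 * γ - 1)) := by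
    intro w
    have h1 : G (w + (r + m)) ≤ H (w + (r + m)) := hGH _
    have hTw : (0:ℝ) < (((r + m) + w : ℕ) : ℝ) := by
      have : 0 < (r + m) + w := by omega
      exact_mod_cast this
    have hle : (((r + m) + w : ℕ) : ℝ) ≤ ((m + 1 + (w + (r + m)) : ℕ) : ℝ) := by
      exact_mod_cast (by omega : (r + m) + w ≤ m + 1 + (w + (r + m)))
    have h2 : ((m + 1 + (w + (r + m)) : ℕ) : ℝ) ^ (1 - 3 * γ)
        ≤ (((r + m) + w : ℕ) : ℝ) ^ (1 - 3 * γ) :=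
      Real.rpow_le_rpow_of_nonpos hTw hle (by linarith)
    have hexp : (1 - 3 * γ) = -(3 * γ - 1) := by ring
    calc G (w + (r + m)) ≤ H (w + (r + m)) := h1
      _ = 8 / (1 - γ) * ((m + 1 + (w + (r + m)) : ℕ) : ℝ) ^ (1 - 3 * γ) := by rw [hH]
      _ ≤ 8 / (1 - γ) * (((r + m) + w : ℕ) : ℝ) ^ (1 - 3 * γ) :=
          mul_le_mul_of_nonneg_left h2 hc8
      _ = 8 / (1 - γ) * (((r + m) + w : ℕ) : ℝ) ^ (-(3 * γ - 1)) := by rw [hexp]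
  have partB : ∑' w, G (w + (r + m))
      ≤ 8 / (1 - γ) * (1 + 1 / (3 * γ - 2)) * ((r + m : ℕ) : ℝ) ^ (2 - 3 * γ) := by
    have hsummGshift : Summable (fun w => G (w + (r + m))) :=
      (summable_nat_add_iff (f := G) (r + m)).mpr hGsum
    have h1 : ∑' w, G (w + (r + m))
        ≤ ∑' w : ℕ, 8 / (1 - γ) * (((r + m) + w : ℕ) : ℝ) ^ (-(3 * γ - 1)) :=
      Summable.tsum_le_tsum hGw hsummGshift hbB
    have h2 : ∑' w : ℕ, 8 / (1 - γ) * (((r + m) + w : ℕ) : ℝ) ^ (-(3 * γ - 1))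
        = 8 / (1 - γ) * ∑' w : ℕ, (((r + m) + w : ℕ) : ℝ) ^ (-(3 * γ - 1)) :=
      tsum_mul_left
    have h3 := tailB (by linarith : (1:ℝ) < 3 * γ - 1) (r + m) hT1
    have hexp1 : (1 : ℝ) - (3 * γ - 1) = 2 - 3 * γ := by ring
    have hexp2 : (3 * γ - 1 - 1 : ℝ) = 3 * γ - 2 := by ring
    rw [hexp1, hexp2] at h3
    calc ∑' w, G (w + (r + m))
        ≤ 8 / (1 - γ) * ∑' w : ℕ, (((r + m) + w : ℕ) : ℝ) ^ (-(3 * γ - 1)) := by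
          rw [← h2]; exact h1
      _ ≤ 8 / (1 - γ) * ((1 + 1 / (3 * γ - 2)) * ((r + m : ℕ) : ℝ) ^ (2 - 3 * γ)) :=
          mul_le_mul_of_nonneg_left h3 hc8
      _ = 8 / (1 - γ) * (1 + 1 / (3 * γ - 2)) * ((r + m : ℕ) : ℝ) ^ (2 - 3 * γ) := by ring
  calc ∑' z, F z ≤ ∑' z, G z := step1
    _ = ∑ z ∈ Finset.range (r + m), G z + ∑' w, G (w + (r + m)) := split.symm
    _ ≤ 32 / (1 - γ) ^ 2 * ((r + m : ℕ) : ℝ) ^ (2 - 3 * γ) +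
        8 / (1 - γ) * (1 + 1 / (3 * γ - 2)) * ((r + m : ℕ) : ℝ) ^ (2 - 3 * γ) :=
        add_le_add partA partB
    _ = (32 / (1 - γ) ^ 2 + 8 / (1 - γ) * (1 + 1 / (3 * γ - 2))) *
        ((r + m : ℕ) : ℝ) ^ (2 - 3 * γ) := by ring
end
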